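/- arXiv:1302.3064 — 4 statements merged into one kernel-verified Lean document; each statement's English description precedes it below -/
import Mathlib

section
/- Let Δ be a simplicial complex on vertex set V and x ∈ V. Then the Castelnuovo–Mumford regularity of Δ (defined as the maximum j such that the reduced homology H̃_{j-1} of some induced subcomplex Δ[S], S ⊆ V, is nonzero over a field k) satisfies reg(Δ) ≤ max{reg(del_Δ(x)), reg(lk_Δ(x)) + 1}. -/
open scoped Classical

noncomputable section

/-! ## Simplicial complexes and Castelnuovo–Mumford regularity -/

/-- A (abstract) simplicial complex on the vertex type `V`, given as a
downward closed family of finsets. -/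
def IsComplex {V : Type} (Δ : Finset V → Prop) : Prop :=
  ∀ ⦃F G : Finset V⦄, Δ F → G ⊆ F → Δ G

/-- The faces of cardinality `n` of a family `Δ` (faces of card `n` are the
`(n-1)`-dimensional simplices). -/
def Faces {V : Type} (Δ : Finset V → Prop) (n : ℕ) : Type :=
  {F : Finset V // Δ F ∧ F.card = n}

/-- The simplicial boundary map of the (augmented) chain complex of `Δ` over
a field `k`, from chains on faces of card `n+1` to chains on faces of card `n`,
with signs determined by a linear order on the vertices. -/
def cxBoundary {V : Type} (k : Type) [Field k] [LinearOrder V]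
    (Δ : Finset V → Prop) (n : ℕ) :
    (Faces Δ (n + 1) →₀ k) →ₗ[k] (Faces Δ n →₀ k) :=
  Finsupp.lsum k fun F => LinearMap.toSpanSingleton k _
    (∑ x ∈ F.1.attach,
      ((-1 : k) ^ (F.1.filter (fun z => z < x.1)).card) •
        (if h : Δ (F.1.erase x.1) ∧ (F.1.erase x.1).card = n then
          Finsupp.single (⟨F.1.erase x.1, h⟩ : Faces Δ n) (1 : k) else 0))

/-- Cycles in chain degree `j` (faces of card `j`); in the bottom degree every
chain is a cycle (augmented complex). -/
def cxCycles {V : Type} (k : Type) [Field k] [LinearOrder V]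
    (Δ : Finset V → Prop) : (j : ℕ) → Submodule k (Faces Δ j →₀ k)
  | 0 => ⊤
  | (n + 1) => LinearMap.ker (cxBoundary k Δ n)

/-- Nonvanishing of the reduced homology `H̃_{j-1}(Δ; k)`: there is a cycle
supported on faces of cardinality `j` that is not a boundary. -/
def HNontrivial {V : Type} (k : Type) [Field k] [LinearOrder V]
    (Δ : Finset V → Prop) (j : ℕ) : Prop :=
  ¬ (cxCycles k Δ j ≤ LinearMap.range (cxBoundary k Δ j))

/-- The induced subcomplex `Δ[S]` on a set `S` of vertices. -/
def restrictC {V : Type} (Δ : Finset V → Prop) (S : Set V) : Finset V → Prop :=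
  fun F => ↑F ⊆ S ∧ Δ F

/-- The Castelnuovo–Mumford regularity of `Δ` over the field `k`:
the largest `j` such that `H̃_{j-1}(Δ[S]; k) ≠ 0` for some subset `S` of the
vertices. -/
def regC {V : Type} [Fintype V] (k : Type) [Field k] (Δ : Finset V → Prop) : ℕ :=
  letI : LinearOrder V :=
    LinearOrder.lift' (Fintype.equivFin V) (Fintype.equivFin V).injective
  sSup {j : ℕ | ∃ S : Set V, HNontrivial k (restrictC Δ S) j}

/-- The deletion `del_Δ(x)`. -/
def delC {V : Type} (Δ : Finset V → Prop) (x : V) : Finset V → Prop :=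
  fun F => Δ F ∧ x ∉ F

/-- The link `lk_Δ(x)`. -/
def lkC {V : Type} (Δ : Finset V → Prop) (x : V) : Finset V → Prop :=
  fun F => x ∉ F ∧ Δ (insert x F)

/-! ## Independence complexes and regularity of graphs -/

/-- The independence complex of a graph, as a family of finsets. -/
def indepFaces {V : Type} (G : SimpleGraph V) : Finset V → Prop :=
  fun F => ∀ u ∈ F, ∀ v ∈ F, ¬ G.Adj u v

/-- The regularity `reg(G)` of a graph: the regularity of its independence
complex over `k`. -/
def gReg {V : Type} [Fintype V] (k : Type) [Field k] (G : SimpleGraph V) : ℕ :=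
  regC k (indepFaces G)

/-- The regularity of the subgraph of `G` induced on the vertex set `S`. -/
def gRegOn {V : Type} [Fintype V] (k : Type) [Field k] (G : SimpleGraph V)
    (S : Set V) : ℕ :=
  regC k (restrictC (indepFaces G) S)

/-! ## Geometric realization, suspension, wedge -/

/-- The geometric realization of a family of finsets `Δ` on a finite vertex
type: convex combinations of vertices supported on a face. -/
abbrev cxSpace {V : Type} [Fintype V] (Δ : Finset V → Prop) : Type :=
  {f : V → ℝ // (∃ F : Finset V, Δ F ∧ ∀ v, f v ≠ 0 → v ∈ F) ∧
    (∀ v, 0 ≤ f v) ∧ ∑ v, f v = 1}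

/-- Relation generating the unreduced suspension: the two ends of the cylinder
are collapsed to two (always present) poles. -/
def suspRel (X : Type) : (X × unitInterval ⊕ Bool) → (X × unitInterval ⊕ Bool) → Prop
  | Sum.inl (x, t), Sum.inr b => (t = 0 ∧ b = false) ∨ (t = 1 ∧ b = true)
  | _, _ => False

/-- The unreduced suspension `Σ X` (the join of `X` with a two-point space). -/
abbrev Susp (X : Type) [TopologicalSpace X] : Type := Quot (suspRel X)

/-- Relation generating the wedge sum with respect to chosen basepoints. -/
def wedgeRel (X Y : Type) (x₀ : X) (y₀ : Y) : X ⊕ Y → X ⊕ Y → Prop :=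
  fun p q => p = Sum.inl x₀ ∧ q = Sum.inr y₀

/-- The wedge sum `X ∨ Y` with respect to chosen basepoints. -/
abbrev Wedge (X Y : Type) [TopologicalSpace X] [TopologicalSpace Y]
    (x₀ : X) (y₀ : Y) : Type := Quot (wedgeRel X Y x₀ y₀)

/-! ## Graph invariants -/

/-- `M` is an induced matching of `G`: a set of edges, pairwise with distinct
endpoints and with no edge of `G` between the endpoints of distinct members. -/
def IsInducedMatching {V : Type} (G : SimpleGraph V) (M : Finset (V × V)) : Prop :=
  (∀ p ∈ M, G.Adj p.1 p.2) ∧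
    ∀ p ∈ M, ∀ q ∈ M, p ≠ q →
      p.1 ≠ q.1 ∧ p.1 ≠ q.2 ∧ p.2 ≠ q.1 ∧ p.2 ≠ q.2 ∧
      ¬ G.Adj p.1 q.1 ∧ ¬ G.Adj p.1 q.2 ∧ ¬ G.Adj p.2 q.1 ∧ ¬ G.Adj p.2 q.2

/-- The induced matching number `im(G)`. -/
def inducedMatchingNumber {V : Type} (G : SimpleGraph V) : ℕ :=
  sSup {n : ℕ | ∃ M : Finset (V × V), IsInducedMatching G M ∧ M.card = n}

/-- The independence number `α(G)`. -/
def indepNumber {V : Type} (G : SimpleGraph V) : ℕ :=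
  sSup {n : ℕ | ∃ s : Finset V, (∀ u ∈ s, ∀ v ∈ s, ¬ G.Adj u v) ∧ s.card = n}

/-- The decycling number `∇(G)`: the least size of a set of vertices whose
removal leaves an acyclic graph. -/
def decyclingNumber {V : Type} [Fintype V] (G : SimpleGraph V) : ℕ :=
  sInf {n : ℕ | ∃ D : Finset V, D.card = n ∧
    (G.induce {v : V | v ∉ D}).IsAcyclic}

/-- `K` contains an induced cycle on `n` vertices. -/
def HasInducedCycle {V : Type} (K : SimpleGraph V) (n : ℕ) : Prop :=
  ∃ f : Fin n ↪ V, ∀ i j : Fin n,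
    K.Adj (f i) (f j) ↔ ((j : ℕ) = ((i : ℕ) + 1) % n ∨ (i : ℕ) = ((j : ℕ) + 1) % n)

/-- A graph is cochordal if its complement is chordal, i.e. the complement has
no induced cycle of length at least `4`. -/
def Cochordal {V : Type} (H : SimpleGraph V) : Prop :=
  ∀ n : ℕ, 4 ≤ n → ¬ HasInducedCycle Hᶜ n

/-- The cochordal cover number `cochord(G)`: the least number of cochordal
subgraphs of `G` whose edge sets cover the edges of `G`. -/
def cochordCover {V : Type} (G : SimpleGraph V) : ℕ :=
  sInf {r : ℕ | ∃ H : Fin r → SimpleGraph V,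
    (∀ i, H i ≤ G ∧ Cochordal (H i)) ∧ ∀ u v, G.Adj u v → ∃ i, (H i).Adj u v}

/-- The graph `G*` on the edge set of `G`: two edges are adjacent iff the
subgraph induced by their endpoints is `2K₂` (disjoint, with no cross edges). -/
def starGraph {V : Type} (G : SimpleGraph V) : SimpleGraph G.edgeSet :=
  SimpleGraph.fromRel fun e f =>
    ∀ a ∈ (e.1 : Sym2 V), ∀ b ∈ (f.1 : Sym2 V), a ≠ b ∧ ¬ G.Adj a b

/-- The chromatic number, as a natural number. -/
def chromNum {W : Type} (H : SimpleGraph W) : ℕ :=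
  sInf {n : ℕ | ∃ c : W → Fin n, ∀ u v, H.Adj u v → c u ≠ c v}

/-- The clique number `ω`. -/
def cliqueNum {W : Type} (H : SimpleGraph W) : ℕ :=
  sSup {n : ℕ | ∃ s : Finset W, H.IsNClique n s}

/-- A graph is perfect if every induced subgraph has chromatic number equal to
its clique number. -/
def IsPerfect {W : Type} (H : SimpleGraph W) : Prop :=
  ∀ A : Set W, chromNum (H.induce A) = cliqueNum (H.induce A)

/-! ## Lozin transform, triple subdivision, whiskers -/

/-- Generating relation for the Lozin transform `L_x(G; Y, Z)`: delete `x`,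
add the path `y(=0) - a(=1) - b(=2) - z(=3)` on four new vertices, join `y`
to every vertex of `Y` and `z` to every vertex of `Z`. -/
def lozinRel {V : Type} (G : SimpleGraph V) (x : V) (Y Z : Set V) :
    ({w : V // w ≠ x} ⊕ Fin 4) → ({w : V // w ≠ x} ⊕ Fin 4) → Prop
  | Sum.inl u, Sum.inl w => G.Adj u.1 w.1
  | Sum.inl u, Sum.inr i => (i = 0 ∧ u.1 ∈ Y) ∨ (i = 3 ∧ u.1 ∈ Z)
  | Sum.inr i, Sum.inr j => (i : ℕ) + 1 = (j : ℕ)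
  | _, _ => False

/-- The Lozin transform `L_x(G; Y, Z)` of `G` at the vertex `x`. -/
def lozinModel {V : Type} (G : SimpleGraph V) (x : V) (Y Z : Set V) :
    SimpleGraph ({w : V // w ≠ x} ⊕ Fin 4) :=
  SimpleGraph.fromRel (lozinRel G x Y Z)

/-- `{Y, Z}` is a partition of the open neighborhood of `x`. -/
def IsLozinPartition {V : Type} (G : SimpleGraph V) (x : V) (Y Z : Set V) : Prop :=
  Y ∪ Z = G.neighborSet x ∧ Disjoint Y Z

/-- Generating relation for the triple subdivision of the edge `(u,v)`:
the edge `uv` is removed and replaced by the path `u - y(=0) - a(=1) - b(=2) - v`. -/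
def tripleSubRel {V : Type} (G : SimpleGraph V) (u v : V) :
    (V ⊕ Fin 3) → (V ⊕ Fin 3) → Prop
  | Sum.inl a, Sum.inl b => G.Adj a b ∧ ¬(a = u ∧ b = v) ∧ ¬(a = v ∧ b = u)
  | Sum.inl a, Sum.inr i => (a = u ∧ i = 0) ∨ (a = v ∧ i = 2)
  | Sum.inr i, Sum.inr j => (i : ℕ) + 1 = (j : ℕ)
  | _, _ => False

/-- The triple subdivision `L(G; e)` of `G` at the edge `e = (u,v)`. -/
def tripleSub {V : Type} (G : SimpleGraph V) (u v : V) : SimpleGraph (V ⊕ Fin 3) :=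
  SimpleGraph.fromRel (tripleSubRel G u v)

/-- Generating relation for the whisker `W_S(G)`: attach a new pendant vertex
to each vertex of `S`. -/
def whiskerSRel {V : Type} (G : SimpleGraph V) (S : Finset V) :
    (V ⊕ {s : V // s ∈ S}) → (V ⊕ {s : V // s ∈ S}) → Prop
  | Sum.inl a, Sum.inl b => G.Adj a b
  | Sum.inl a, Sum.inr s => a = s.1
  | _, _ => False

/-- The whisker graph `W_S(G)` on `V ⊕ S`. -/
def whiskerS {V : Type} (G : SimpleGraph V) (S : Finset V) :
    SimpleGraph (V ⊕ {s : V // s ∈ S}) :=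
  SimpleGraph.fromRel (whiskerSRel G S)

/-- Generating relation for the full whisker `W(G)`: attach a pendant vertex
to every vertex. -/
def whiskerRel {V : Type} (G : SimpleGraph V) : (V ⊕ V) → (V ⊕ V) → Prop
  | Sum.inl a, Sum.inl b => G.Adj a b
  | Sum.inl a, Sum.inr b => a = b
  | _, _ => False

/-- The full whisker graph `W(G)` on `V ⊕ V`. -/
def whiskerGraph {V : Type} (G : SimpleGraph V) : SimpleGraph (V ⊕ V) :=
  SimpleGraph.fromRel (whiskerRel G)

/-! ## Vertex decomposability -/

/-- The closed neighborhood of `x` inside the finset `A`. -/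
def closedNbrOn {V : Type} (G : SimpleGraph V) (A : Finset V) (x : V) : Finset V :=
  A.filter fun z => z = x ∨ G.Adj x z

/-- `T` is an independent set of `G`. -/
def IsIndepFinset {V : Type} (G : SimpleGraph V) (T : Finset V) : Prop :=
  ∀ u ∈ T, ∀ v ∈ T, ¬ G.Adj u v

/-- `x` is a shedding vertex of the induced subgraph `G[A]`. -/
def IsSheddingOn {V : Type} (G : SimpleGraph V) (A : Finset V) (x : V) : Prop :=
  ∀ T ⊆ A \ closedNbrOn G A x, IsIndepFinset G T →
    ∃ w ∈ A, G.Adj x w ∧ IsIndepFinset G (insert w T)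

/-- Vertex decomposability of the induced subgraph `G[A]`. -/
def VDOn {V : Type} (G : SimpleGraph V) : Finset V → Prop := fun A =>
  (∀ u ∈ A, ∀ v ∈ A, ¬ G.Adj u v) ∨
    ∃ x : {y : V // y ∈ A}, IsSheddingOn G A x.1 ∧
      VDOn G (A.erase x.1) ∧ VDOn G (A \ closedNbrOn G A x.1)
termination_by A => A.card
decreasing_by
  · exact Finset.card_erase_lt_of_mem x.2
  · refine Finset.card_lt_card ?_
    refine (Finset.ssubset_iff_of_subset Finset.sdiff_subset).2 ⟨x.1, x.2, ?_⟩
    simp [closedNbrOn, x.2]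


/-!
Fix `x ∈ S` and write `Γ = Δ[S]`; then `del_Γ(x) = del_Δ(x)[S]` and `lk_Γ(x) = lk_Δ(x)[S]`,
while for `x ∉ S` deleting `x` does not change `Δ[S]`. Every chain of `Γ` is `z = d + x * w` with
`d` a chain of the deletion and `w` a chain of the link, and the cone operator `c ↦ x * c`
satisfies `∂(x * c) = c - x * ∂c`. If `z` is a cycle, comparing the faces containing `x` gives
`∂w = 0`; if `w = ∂u` in the link, then `d + u` is a cycle of the deletion, and if `d + u = ∂v`
there, then `z = ∂(v - x * u)`. So `H̃_{j-1}(Γ) ≠ 0` forces `H̃_{j-1}(del_Γ(x)) ≠ 0` or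
`H̃_{j-2}(lk_Γ(x)) ≠ 0`: exactness of the long exact sequence of the pair `(Γ, del_Γ(x))`.
-/

theorem Finsupp.supported_le_iff {α R : Type*} [Semiring R] {s : Set α} {N : Submodule R (α →₀ R)} :
    Finsupp.supported R R s ≤ N ↔ ∀ a ∈ s, Finsupp.single a 1 ∈ N := by
  rw [Finsupp.supported_eq_span_single, Submodule.span_le, Set.image_subset_iff]
  rfl

theorem IsComplex.restrictC {V : Type} {Δ : Finset V → Prop} (hΔ : IsComplex Δ) (S : Set V) :
    IsComplex (restrictC Δ S) :=
  fun _ _ hF hGF => ⟨(Finset.coe_subset.2 hGF).trans hF.1, hΔ hF.2 hGF⟩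

theorem IsComplex.delC {V : Type} {Δ : Finset V → Prop} (hΔ : IsComplex Δ) (x : V) :
    IsComplex (delC Δ x) :=
  fun _ _ hF hGF => ⟨hΔ hF.1 hGF, fun hx => hF.2 (hGF hx)⟩

theorem IsComplex.lkC {V : Type} {Δ : Finset V → Prop} (hΔ : IsComplex Δ) (x : V) :
    IsComplex (lkC Δ x) :=
  fun _ _ hF hGF => ⟨fun hx => hF.1 (hGF hx), hΔ hF.2 (Finset.insert_subset_insert x hGF)⟩

-- `lkC` was elaborated with the classical `DecidableEq V` instance.
theorem lkC_iff {V : Type} [DecidableEq V] {Δ : Finset V → Prop} {x : V} {F : Finset V} :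
    lkC Δ x F ↔ x ∉ F ∧ Δ (insert x F) := by
  unfold lkC
  congr!

namespace SimplicialChains

open Finsupp

section Chains

variable {V : Type} (R : Type) [Semiring R]

-- The chains of all complexes on `V` live in one free module, on all finsets of vertices.
def chains (P : Finset V → Prop) (n : ℕ) : Submodule R (Finset V →₀ R) :=
  supported R R {F | P F ∧ F.card = n}

variable {R} {P Q : Finset V → Prop}

theorem chains_mono (h : ∀ F, P F → Q F) (n : ℕ) : chains R P n ≤ chains R Q n :=
  supported_mono fun F hF => ⟨h F hF.1, hF.2⟩

theorem chains_le_supported_notMem {x : V} (h : ∀ F, P F → x ∉ F) (n : ℕ) :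
    chains R P n ≤ supported R R {F | x ∉ F} :=
  supported_mono fun F hF => h F hF.1

end Chains

section Sign

variable {V : Type} [LinearOrder V] (R : Type) [CommRing R] {x y : V} {F : Finset V}

def faceSign (F : Finset V) (y : V) : R := (-1) ^ (F.filter (· < y)).card

theorem faceSign_insert_self : faceSign R (insert x F) x = faceSign R F x := by
  rw [faceSign, Finset.filter_insert, if_neg (lt_irrefl x), faceSign]

theorem faceSign_erase_self : faceSign R (F.erase x) x = faceSign R F x := by
  rw [faceSign, Finset.filter_erase, Finset.erase_eq_of_notMem (by simp), faceSign]

theorem faceSign_mul_self : faceSign R F y * faceSign R F y = 1 := by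
  rw [faceSign, ← pow_add, Even.neg_one_pow ⟨_, rfl⟩]

theorem faceSign_mul_faceSign_insert (hx : x ∉ F) (hy : y ∈ F) :
    faceSign R F x * faceSign R (insert x F) y =
      -(faceSign R F y * faceSign R (F.erase y) x) := by
  have hxy : x ≠ y := fun h => hx (h ▸ hy)
  unfold faceSign
  rcases hxy.lt_or_gt with h | h
  · have hx' : x ∉ F.filter (· < y) := fun hmem => hx (Finset.mem_filter.1 hmem).1
    rw [Finset.filter_insert, if_pos h, Finset.card_insert_of_notMem hx', Finset.filter_erase,
      Finset.erase_eq_of_notMem (by simp [h.not_gt]), pow_succ]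
    ring
  · have hy' : y ∈ F.filter (· < x) := Finset.mem_filter.2 ⟨hy, h⟩
    rw [Finset.filter_insert, if_neg h.not_gt, Finset.filter_erase,
      ← Finset.card_erase_add_one hy', pow_succ]
    ring

end Sign

section Operators

variable {V : Type} [LinearOrder V] (R : Type) [CommRing R] (x : V)

def boundary : (Finset V →₀ R) →ₗ[R] (Finset V →₀ R) :=
  linearCombination R fun F => ∑ y ∈ F, faceSign R F y • single (F.erase y) 1

def cone : (Finset V →₀ R) →ₗ[R] (Finset V →₀ R) :=
  linearCombination R fun F => if x ∈ F then 0 else faceSign R F x • single (insert x F) 1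

def uncone : (Finset V →₀ R) →ₗ[R] (Finset V →₀ R) :=
  linearCombination R fun F => if x ∈ F then faceSign R F x • single (F.erase x) 1 else 0

variable {x} {F : Finset V}

theorem boundary_single :
    boundary R (single F 1) = ∑ y ∈ F, faceSign R F y • single (F.erase y) 1 := by
  rw [boundary, linearCombination_single, one_smul]

theorem cone_single_of_mem (h : x ∈ F) : cone R x (single F 1) = 0 := by
  rw [cone, linearCombination_single, one_smul, if_pos h]

theorem cone_single_of_notMem (h : x ∉ F) :
    cone R x (single F 1) = faceSign R F x • single (insert x F) 1 := by
  rw [cone, linearCombination_single, one_smul, if_neg h]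

theorem uncone_single_of_mem (h : x ∈ F) :
    uncone R x (single F 1) = faceSign R F x • single (F.erase x) 1 := by
  rw [uncone, linearCombination_single, one_smul, if_pos h]

theorem uncone_single_of_notMem (h : x ∉ F) : uncone R x (single F 1) = 0 := by
  rw [uncone, linearCombination_single, one_smul, if_neg h]

theorem uncone_cone_single (h : x ∉ F) : uncone R x (cone R x (single F 1)) = single F 1 := by
  rw [cone_single_of_notMem R h, map_smul, uncone_single_of_mem R (Finset.mem_insert_self x F),
    Finset.erase_insert h, faceSign_insert_self, smul_smul, faceSign_mul_self, one_smul]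

theorem cone_uncone_single (h : x ∈ F) : cone R x (uncone R x (single F 1)) = single F 1 := by
  rw [uncone_single_of_mem R h, map_smul, cone_single_of_notMem R (Finset.notMem_erase x F),
    Finset.insert_erase h, faceSign_erase_self, smul_smul, faceSign_mul_self, one_smul]

theorem boundary_cone_single (F : Finset V) :
    boundary R (cone R x (single F 1)) = single F 1 - cone R x (boundary R (single F 1)) := by
  by_cases hx : x ∈ F
  · rw [cone_single_of_mem R hx, map_zero, boundary_single, map_sum,
      Finset.sum_eq_single_of_mem x hx fun y _ hyx => by
        rw [map_smul, cone_single_of_mem R (Finset.mem_erase.2 ⟨hyx.symm, hx⟩), smul_zero],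
      ← uncone_single_of_mem R hx, cone_uncone_single R hx, sub_self]
  · rw [cone_single_of_notMem R hx, map_smul, boundary_single, Finset.sum_insert hx,
      Finset.erase_insert hx, faceSign_insert_self, smul_add, smul_smul, faceSign_mul_self,
      one_smul, sub_eq_add_neg, boundary_single, map_sum, ← Finset.sum_neg_distrib, Finset.smul_sum]
    congr 1
    refine Finset.sum_congr rfl fun y hy => ?_
    have hxy : x ≠ y := fun h => hx (h ▸ hy)
    rw [map_smul, cone_single_of_notMem R fun h => hx (Finset.mem_of_mem_erase h),
      Finset.erase_insert_of_ne hxy, smul_smul, smul_smul, faceSign_mul_faceSign_insert R hx hy,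
      neg_smul]

theorem boundary_cone (c : Finset V →₀ R) :
    boundary R (cone R x c) = c - cone R x (boundary R c) := by
  have h : boundary R ∘ₗ cone R x = LinearMap.id - cone R x ∘ₗ boundary R := by
    ext F : 2
    simpa using boundary_cone_single R F
  exact LinearMap.congr_fun h c

variable {R} {c : Finset V →₀ R}

theorem uncone_cone (hc : c ∈ supported R R {F | x ∉ F}) : uncone R x (cone R x c) = c :=
  (supported_le_iff (N := LinearMap.eqLocus (uncone R x ∘ₗ cone R x) LinearMap.id)).2
    (fun _ hF => uncone_cone_single R hF) hc

theorem uncone_eq_zero (hc : c ∈ supported R R {F | x ∉ F}) : uncone R x c = 0 :=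
  (supported_le_iff (N := LinearMap.ker (uncone R x))).2
    (fun _ hF => uncone_single_of_notMem R hF) hc

theorem boundary_mem_supported_notMem (hc : c ∈ supported R R {F | x ∉ F}) :
    boundary R c ∈ supported R R {F | x ∉ F} := by
  refine (supported_le_iff (N := (supported R R {F | x ∉ F}).comap (boundary R))).2
    (fun F hF => ?_) hc
  rw [Submodule.mem_comap, boundary_single]
  exact Submodule.sum_mem _ fun y _ => Submodule.smul_mem _ _
    (single_mem_supported R 1 fun h => hF (Finset.mem_of_mem_erase h))

variable {Γ : Finset V → Prop} {n : ℕ}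

theorem cone_mem_chains (hc : c ∈ chains R (lkC Γ x) n) : cone R x c ∈ chains R Γ (n + 1) := by
  refine (supported_le_iff (N := (chains R Γ (n + 1)).comap (cone R x))).2
    (fun F hF => ?_) hc
  obtain ⟨hlk, rfl⟩ := hF
  obtain ⟨hxF, hΓF⟩ := lkC_iff.1 hlk
  rw [Submodule.mem_comap, cone_single_of_notMem R hxF]
  exact Submodule.smul_mem _ _
    (single_mem_supported R 1 ⟨hΓF, Finset.card_insert_of_notMem hxF⟩)

theorem uncone_mem_chains (hc : c ∈ chains R Γ (n + 1)) : uncone R x c ∈ chains R (lkC Γ x) n := by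
  refine (supported_le_iff (N := (chains R (lkC Γ x) n).comap (uncone R x))).2
    (fun F hF => ?_) hc
  obtain ⟨hΓF, hcard⟩ := hF
  rw [Submodule.mem_comap]
  by_cases hxF : x ∈ F
  · rw [uncone_single_of_mem R hxF]
    refine Submodule.smul_mem _ _
      (single_mem_supported R 1 ⟨lkC_iff.2 ⟨Finset.notMem_erase x F, ?_⟩, ?_⟩)
    · rwa [Finset.insert_erase hxF]
    · rw [Finset.card_erase_of_mem hxF, hcard, Nat.add_sub_cancel]
  · rw [uncone_single_of_notMem R hxF]
    exact Submodule.zero_mem _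

theorem sub_cone_uncone_mem_chains (hc : c ∈ chains R Γ n) :
    c - cone R x (uncone R x c) ∈ chains R (delC Γ x) n := by
  refine (supported_le_iff (N := (chains R (delC Γ x) n).comap
    (LinearMap.id - cone R x ∘ₗ uncone R x))).2 (fun F hF => ?_) hc
  rw [Submodule.mem_comap, LinearMap.sub_apply, LinearMap.id_apply, LinearMap.comp_apply]
  by_cases hxF : x ∈ F
  · rw [cone_uncone_single R hxF, sub_self]
    exact Submodule.zero_mem _
  · rw [uncone_single_of_notMem R hxF, map_zero, sub_zero]
    exact single_mem_supported R 1 ⟨⟨hF.1, hxF⟩, hF.2⟩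

end Operators

section Homology

variable {V : Type} [LinearOrder V] (R : Type) [CommRing R]

def cycles (P : Finset V → Prop) (n : ℕ) : Submodule R (Finset V →₀ R) :=
  chains R P n ⊓ LinearMap.ker (boundary R)

def boundaries (P : Finset V → Prop) (n : ℕ) : Submodule R (Finset V →₀ R) :=
  (chains R P (n + 1)).map (boundary R)

variable {R}

theorem chains_zero_le_ker_boundary (P : Finset V → Prop) :
    chains R P 0 ≤ LinearMap.ker (boundary R) :=
  supported_le_iff.2 fun F hF => by
    rw [LinearMap.mem_ker, Finset.card_eq_zero.1 hF.2, boundary_single, Finset.sum_empty]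

theorem cycles_le_boundaries_of_delC_of_lkC {Γ : Finset V → Prop} (hΓ : IsComplex Γ) (x : V)
    (m : ℕ) (hdel : cycles R (delC Γ x) (m + 1) ≤ boundaries R (delC Γ x) (m + 1))
    (hlk : cycles R (lkC Γ x) m ≤ boundaries R (lkC Γ x) m) :
    cycles R Γ (m + 1) ≤ boundaries R Γ (m + 1) := by
  have lk_le_del : ∀ F, lkC Γ x F → delC Γ x F := fun F hF =>
    ⟨hΓ (lkC_iff.1 hF).2 (Finset.subset_insert x F), hF.1⟩
  rintro z ⟨hz, hbz : boundary R z = 0⟩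
  set w := uncone R x z
  set d := z - cone R x w with hd_def
  have hw : w ∈ chains R (lkC Γ x) m := uncone_mem_chains hz
  have hd : d ∈ chains R (delC Γ x) (m + 1) := sub_cone_uncone_mem_chains hz
  clear_value w d
  have hw_free := chains_le_supported_notMem (fun F hF => hF.1) m hw
  have hd_free := chains_le_supported_notMem (fun F hF => hF.2) (m + 1) hd
  have hbd : boundary R d = cone R x (boundary R w) - w := by
    rw [hd_def, map_sub, hbz, boundary_cone, zero_sub, neg_sub]
  -- `uncone` kills the `x`-free chains `boundary d` and `w` and inverts `cone` on `boundary w`.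
  have hbw : boundary R w = 0 := by
    have h := congrArg (uncone R x) hbd
    rwa [map_sub, uncone_eq_zero (boundary_mem_supported_notMem hd_free), uncone_eq_zero hw_free,
      uncone_cone (boundary_mem_supported_notMem hw_free), sub_zero, eq_comm] at h
  obtain ⟨u, hu, hbu⟩ := hlk ⟨hw, hbw⟩
  have hdu : d + u ∈ chains R (delC Γ x) (m + 1) := add_mem hd (chains_mono lk_le_del _ hu)
  have hbdu : boundary R (d + u) = 0 := by
    rw [map_add, hbd, hbw, hbu, map_zero, zero_sub, neg_add_cancel]
  obtain ⟨v, hv, hbv⟩ := hdel ⟨hdu, hbdu⟩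
  refine ⟨v - cone R x u, sub_mem (chains_mono (fun F hF => hF.1) _ hv) (cone_mem_chains hu), ?_⟩
  rw [map_sub, hbv, boundary_cone, hbu, hd_def]
  abel

end Homology

section Embedding

variable {V : Type} (R : Type) [Semiring R] (P : Finset V → Prop) (n : ℕ)

def embed : (Faces P n →₀ R) →ₗ[R] (Finset V →₀ R) :=
  lmapDomain R R Subtype.val

theorem embed_injective : Function.Injective (embed R P n) :=
  mapDomain_injective Subtype.val_injective

theorem range_embed : LinearMap.range (embed R P n) = chains R P n := by
  rw [LinearMap.range_eq_map, ← supported_univ]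
  exact (lmapDomain_supported (M := R) (R := R) (Subtype.val : Faces P n → Finset V) _).trans
    (congrArg _ (Set.ext fun F =>
      ⟨fun ⟨G, _, hG⟩ => hG ▸ G.2, fun hF => ⟨⟨F, hF⟩, trivial, rfl⟩⟩))

end Embedding

section Translation

variable {V : Type} [LinearOrder V] (k : Type) [Field k] {P : Finset V → Prop}

theorem embed_comp_cxBoundary (hP : IsComplex P) (n : ℕ) :
    embed k P n ∘ₗ cxBoundary k P n = boundary k ∘ₗ embed k P (n + 1) := by
  ext ⟨F, hF⟩ : 2
  have hface : ∀ y ∈ F, P (F.erase y) ∧ (F.erase y).card = n := fun y hy =>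
    ⟨hP hF.1 (Finset.erase_subset y F),
      by rw [Finset.card_erase_of_mem hy, hF.2, Nat.add_sub_cancel]⟩
  simp only [LinearMap.comp_apply]
  erw [cxBoundary, linearCombination_single, one_smul, map_sum, embed, lmapDomain_apply,
    lsingle_apply, mapDomain_single, boundary_single, ← Finset.sum_attach F]
  refine Finset.sum_congr rfl fun y _ => ?_
  rw [dif_pos (hface y y.2)]
  erw [map_smul, lmapDomain_apply, mapDomain_single]
  rfl

theorem map_embed_cxCycles (hP : IsComplex P) :
    ∀ n, (cxCycles k P n).map (embed k P n) = cycles k P n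
  | 0 => by
    rw [cxCycles, ← LinearMap.range_eq_map, range_embed, cycles,
      inf_eq_left.2 (chains_zero_le_ker_boundary P)]
  | n + 1 => by
    have hker : LinearMap.ker (cxBoundary k P n) =
        (LinearMap.ker (boundary k)).comap (embed k P (n + 1)) := by
      rw [← LinearMap.ker_comp, ← embed_comp_cxBoundary k hP,
        LinearMap.ker_comp_of_ker_eq_bot _ (LinearMap.ker_eq_bot.2 (embed_injective k P n))]
    rw [cxCycles, hker, Submodule.map_comap_eq, range_embed]
    rfl

theorem map_embed_range_cxBoundary (hP : IsComplex P) (n : ℕ) :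
    (LinearMap.range (cxBoundary k P n)).map (embed k P n) = boundaries k P n := by
  rw [← LinearMap.range_comp, embed_comp_cxBoundary k hP, LinearMap.range_comp, range_embed]
  rfl

theorem hNontrivial_iff (hP : IsComplex P) (n : ℕ) :
    HNontrivial k P n ↔ ¬ cycles k P n ≤ boundaries k P n := by
  rw [HNontrivial, ← Submodule.map_le_map_iff_of_injective (embed_injective k P n),
    map_embed_cxCycles k hP, map_embed_range_cxBoundary k hP]

end Translation

end SimplicialChains

open SimplicialChains in
theorem HNontrivial.delC_or_lkC {V : Type} [LinearOrder V] {k : Type} [Field k]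
    {Γ : Finset V → Prop} (hΓ : IsComplex Γ) (x : V) {m : ℕ} (h : HNontrivial k Γ (m + 1)) :
    HNontrivial k (delC Γ x) (m + 1) ∨ HNontrivial k (lkC Γ x) m := by
  rw [hNontrivial_iff k hΓ] at h
  rw [hNontrivial_iff k (hΓ.delC x), hNontrivial_iff k (hΓ.lkC x), ← not_and_or]
  exact fun ⟨hdel, hlk⟩ => h (cycles_le_boundaries_of_delC_of_lkC hΓ x m hdel hlk)

theorem HNontrivial.le_card {V : Type} [Fintype V] [LinearOrder V] {k : Type} [Field k]
    {P : Finset V → Prop} {j : ℕ} (h : HNontrivial k P j) : j ≤ Fintype.card V := by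
  by_contra! hj
  have : IsEmpty (Faces P j) := ⟨fun F => (F.1.card_le_univ.trans_lt hj).ne F.2.2⟩
  exact h fun c _ => Subsingleton.elim c 0 ▸ zero_mem _

section RestrictC

variable {V : Type} {Δ : Finset V → Prop} {x : V} {S : Set V}

theorem restrictC_delC : restrictC (delC Δ x) S = delC (restrictC Δ S) x :=
  funext fun _ => propext and_assoc.symm

theorem restrictC_delC_of_notMem (hx : x ∉ S) : restrictC (delC Δ x) S = restrictC Δ S :=
  funext fun _ => propext ⟨fun ⟨hS, hF, _⟩ => ⟨hS, hF⟩,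
    fun ⟨hS, hF⟩ => ⟨hS, hF, fun hxF => hx (hS hxF)⟩⟩

theorem restrictC_lkC (hx : x ∈ S) : restrictC (lkC Δ x) S = lkC (restrictC Δ S) x := by
  funext F
  simp only [restrictC, lkC, Finset.coe_insert, Set.insert_subset_iff, hx, true_and]
  exact propext and_left_comm

end RestrictC

section Regularity

variable {V : Type} [LinearOrder V] (k : Type) [Field k]

def regWith (Δ : Finset V → Prop) : ℕ :=
  sSup {j : ℕ | ∃ S : Set V, HNontrivial k (restrictC Δ S) j}

theorem le_regWith [Fintype V] {Δ : Finset V → Prop} {S : Set V} {j : ℕ}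
    (h : HNontrivial k (restrictC Δ S) j) : j ≤ regWith k Δ :=
  le_csSup ⟨Fintype.card V, fun _ ⟨_, h'⟩ => h'.le_card⟩ ⟨S, h⟩

theorem regWith_le_max_del_link [Fintype V] {Δ : Finset V → Prop} (hΔ : IsComplex Δ) (x : V) :
    regWith k Δ ≤ max (regWith k (delC Δ x)) (regWith k (lkC Δ x) + 1) := by
  refine csSup_le' ?_
  rintro (_ | m) ⟨S, hS⟩
  · exact Nat.zero_le _
  by_cases hx : x ∈ S
  · rcases hS.delC_or_lkC (hΔ.restrictC S) x with hdel | hlk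
    · rw [← restrictC_delC] at hdel
      exact le_max_of_le_left (le_regWith k hdel)
    · rw [← restrictC_lkC hx] at hlk
      exact le_max_of_le_right (Nat.add_le_add_right (le_regWith k hlk) 1)
  · rw [← restrictC_delC_of_notMem hx] at hS
    exact le_max_of_le_left (le_regWith k hS)

end Regularity

/-- If `Δ` is a simplicial complex on `V` and `x ∈ V`, then
`reg(Δ) ≤ max (reg(del_Δ(x))) (reg(lk_Δ(x)) + 1)`. -/
theorem regC_le_max_del_link {V : Type} [Fintype V] (k : Type) [Field k]
    (Δ : Finset V → Prop) (hΔ : IsComplex Δ) (x : V) :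
    regC k Δ ≤ max (regC k (delC Δ x)) (regC k (lkC Δ x) + 1) := by
  let : LinearOrder V :=
    LinearOrder.lift' (Fintype.equivFin V) (Fintype.equivFin V).injective
  exact regWith_le_max_del_link k hΔ x
end
end

section
/- If G is a graph and u, v are vertices with N_G(u) ⊆ N_G(v), then the independence complex I(G) is homotopy equivalent to the independence complex I(G − v). -/
open scoped Classical

/-!
Since `N(u) ⊆ N(v)`, adding `u` to an independent set containing `v` keeps it independent:
`v` is dominated by `u` in `I(G)`. Hence sliding the barycentric weight of `v` onto `u`,
`x ↦ x + t x_v (e_u - e_v)` for `t ∈ [0, 1]`, never leaves `I(G)`; at `t = 1` it lands in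
`I(G - v)`, on which it is the identity. This is a deformation retraction of `I(G)` onto
`I(G - v)`.
-/

noncomputable section Domination

variable {V : Type}

def pushWeight (u v : V) (t : ℝ) (f : V → ℝ) : V → ℝ :=
  f + Pi.single u (t * f v) - Pi.single v (t * f v)

variable {u v : V}

lemma pushWeight_apply_of_ne {w : V} (hwu : w ≠ u) (hwv : w ≠ v) (t : ℝ) (f : V → ℝ) :
    pushWeight u v t f w = f w := by
  simp [pushWeight, hwu, hwv]

lemma pushWeight_apply_left (huv : u ≠ v) (t : ℝ) (f : V → ℝ) :
    pushWeight u v t f u = f u + t * f v := by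
  simp [pushWeight, huv]

lemma pushWeight_apply_right (huv : u ≠ v) (t : ℝ) (f : V → ℝ) :
    pushWeight u v t f v = (1 - t) * f v := by
  simp [pushWeight, huv.symm]
  ring

lemma pushWeight_of_apply_eq_zero {f : V → ℝ} (hfv : f v = 0) (t : ℝ) :
    pushWeight u v t f = f := by
  simp [pushWeight, hfv]

lemma pushWeight_zero (f : V → ℝ) : pushWeight u v 0 f = f := by
  simp [pushWeight]

lemma pushWeight_nonneg (huv : u ≠ v) {t : ℝ} (ht₀ : 0 ≤ t) (ht₁ : t ≤ 1) {f : V → ℝ}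
    (hf : ∀ w, 0 ≤ f w) (w : V) : 0 ≤ pushWeight u v t f w := by
  by_cases hwu : w = u
  · rw [hwu, pushWeight_apply_left huv]
    exact add_nonneg (hf u) (mul_nonneg ht₀ (hf v))
  by_cases hwv : w = v
  · rw [hwv, pushWeight_apply_right huv]
    exact mul_nonneg (by linarith) (hf v)
  · rw [pushWeight_apply_of_ne hwu hwv]
    exact hf w

lemma continuous_pushWeight :
    Continuous fun p : ℝ × (V → ℝ) => pushWeight u v p.1 p.2 := by
  have hmass : Continuous fun p : ℝ × (V → ℝ) => p.1 * p.2 v := by fun_prop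
  exact (continuous_snd.add ((continuous_single u).comp hmass)).sub
    ((continuous_single v).comp hmass)

variable {Δ : Finset V → Prop}

def IsDominatedBy (Δ : Finset V → Prop) (v u : V) : Prop :=
  ∀ F, Δ F → v ∈ F → Δ (insert u F)

lemma mem_insert_of_pushWeight_ne_zero {f : V → ℝ} {F : Finset V}
    (hF : ∀ w, f w ≠ 0 → w ∈ F) {t : ℝ} {w : V} (hw : pushWeight u v t f w ≠ 0) :
    w ∈ insert u F := by
  rw [Finset.mem_insert]
  by_cases hwu : w = u
  · exact Or.inl hwu
  by_cases hwv : w = v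
  · subst hwv
    refine Or.inr (hF w fun hfw => hw ?_)
    simp [pushWeight, hfw]
  · rw [pushWeight_apply_of_ne hwu hwv] at hw
    exact Or.inr (hF w hw)

lemma exists_face_pushWeight (hdom : IsDominatedBy Δ v u) {f : V → ℝ}
    (hf : ∃ F, Δ F ∧ ∀ w, f w ≠ 0 → w ∈ F) (t : ℝ) :
    ∃ F, Δ F ∧ ∀ w, pushWeight u v t f w ≠ 0 → w ∈ F := by
  obtain ⟨F, hF, hsupp⟩ := hf
  by_cases hfv : f v = 0
  · rw [pushWeight_of_apply_eq_zero hfv]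
    exact ⟨F, hF, hsupp⟩
  · exact ⟨insert u F, hdom F hF (hsupp v hfv),
      fun w hw => mem_insert_of_pushWeight_ne_zero hsupp hw⟩

lemma exists_restrictC_face_of_apply_eq_zero (hΔ : IsComplex Δ) {f : V → ℝ}
    (hf : ∃ F, Δ F ∧ ∀ w, f w ≠ 0 → w ∈ F) (hfv : f v = 0) :
    ∃ F, restrictC Δ {w | w ≠ v} F ∧ ∀ w, f w ≠ 0 → w ∈ F := by
  obtain ⟨F, hF, hsupp⟩ := hf
  refine ⟨F.erase v, ⟨fun w hw => (Finset.mem_erase.1 hw).1, hΔ hF (F.erase_subset v)⟩,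
    fun w hw => Finset.mem_erase.2 ⟨?_, hsupp w hw⟩⟩
  rintro rfl
  exact hw hfv

variable [Fintype V]

lemma sum_pushWeight (t : ℝ) (f : V → ℝ) : ∑ w, pushWeight u v t f w = ∑ w, f w := by
  simp [pushWeight, Finset.sum_add_distrib, Finset.sum_sub_distrib]

def cxSpaceInclusion {Δ' : Finset V → Prop} (hle : ∀ F, Δ F → Δ' F) :
    C(cxSpace Δ, cxSpace Δ') where
  toFun x := ⟨x.1, x.2.1.imp fun F hF => ⟨hle F hF.1, hF.2⟩, x.2.2⟩
  continuous_toFun := continuous_subtype_val.subtype_mk _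

def pushRetraction (hΔ : IsComplex Δ) (huv : u ≠ v) (hdom : IsDominatedBy Δ v u) :
    C(cxSpace Δ, cxSpace (restrictC Δ {w | w ≠ v})) where
  toFun x := ⟨pushWeight u v 1 x.1,
    exists_restrictC_face_of_apply_eq_zero hΔ (exists_face_pushWeight hdom x.2.1 1)
      (by rw [pushWeight_apply_right huv, sub_self, zero_mul]),
    pushWeight_nonneg huv zero_le_one le_rfl x.2.2.1, (sum_pushWeight 1 x.1).trans x.2.2.2⟩
  continuous_toFun :=
    (continuous_pushWeight.comp (continuous_const.prodMk continuous_subtype_val)).subtype_mk _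

def pushHomotopy (hΔ : IsComplex Δ) (huv : u ≠ v) (hdom : IsDominatedBy Δ v u) :
    (ContinuousMap.id (cxSpace Δ)).Homotopy
      ((cxSpaceInclusion fun _ hF => hF.2).comp (pushRetraction hΔ huv hdom)) where
  toFun p := ⟨pushWeight u v p.1 p.2.1, exists_face_pushWeight hdom p.2.2.1 p.1,
    pushWeight_nonneg huv p.1.2.1 p.1.2.2 p.2.2.2.1, (sum_pushWeight _ p.2.1).trans p.2.2.2.2⟩
  continuous_toFun := (continuous_pushWeight.comp
    ((continuous_subtype_val.comp continuous_fst).prodMk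
      (continuous_subtype_val.comp continuous_snd))).subtype_mk _
  map_zero_left x := Subtype.ext (pushWeight_zero x.1)
  map_one_left _ := rfl

lemma pushRetraction_comp_cxSpaceInclusion (hΔ : IsComplex Δ) (huv : u ≠ v)
    (hdom : IsDominatedBy Δ v u) :
    (pushRetraction hΔ huv hdom).comp (cxSpaceInclusion fun _ hF => hF.2) = .id _ := by
  ext x : 2
  obtain ⟨F, ⟨hFv, -⟩, hsupp⟩ := x.2.1
  have hxv : x.1 v = 0 := by
    by_contra hxv
    exact hFv (hsupp v hxv) rfl
  exact pushWeight_of_apply_eq_zero hxv 1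

def homotopyEquivRestrictOfIsDominatedBy (hΔ : IsComplex Δ) (huv : u ≠ v)
    (hdom : IsDominatedBy Δ v u) :
    ContinuousMap.HomotopyEquiv (cxSpace Δ) (cxSpace (restrictC Δ {w | w ≠ v})) where
  toFun := pushRetraction hΔ huv hdom
  invFun := cxSpaceInclusion fun _ hF => hF.2
  left_inv := ⟨(pushHomotopy hΔ huv hdom).symm⟩
  right_inv := by rw [pushRetraction_comp_cxSpaceInclusion]

end Domination

lemma indepFaces_isComplex {V : Type} (G : SimpleGraph V) : IsComplex (indepFaces G) :=
  fun _ _ hF hGF a ha b hb => hF a (hGF ha) b (hGF hb)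

lemma indepFaces_isDominatedBy_of_neighborSet_subset {V : Type} {G : SimpleGraph V} {u v : V}
    (h : G.neighborSet u ⊆ G.neighborSet v) : IsDominatedBy (indepFaces G) v u := by
  intro F hF hvF
  have hu : ∀ x ∈ F, ¬ G.Adj u x := fun x hx hux => hF v hvF x hx (h hux)
  intro a ha b hb hab
  rcases Finset.mem_insert.1 ha with rfl | haF <;> rcases Finset.mem_insert.1 hb with rfl | hbF
  · exact G.irrefl hab
  · exact hu b hbF hab
  · exact hu a haF hab.symm
  · exact hF a haF b hbF hab

/-- If `N_G(u) ⊆ N_G(v)` for distinct vertices `u, v`, then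
`I(G)` is homotopy equivalent to `I(G - v)`. -/
theorem indepComplex_homotopyEquiv_of_nbhd_subset {V : Type} [Fintype V]
    (G : SimpleGraph V) (u v : V) (huv : u ≠ v)
    (h : G.neighborSet u ⊆ G.neighborSet v) :
    Nonempty (ContinuousMap.HomotopyEquiv
      (cxSpace (indepFaces G))
      (cxSpace (restrictC (indepFaces G) {w | w ≠ v}))) :=
  ⟨homotopyEquivRestrictOfIsDominatedBy (indepFaces_isComplex G) huv
    (indepFaces_isDominatedBy_of_neighborSet_subset h)⟩
end

section
/- If G is a graph and u, v are vertices with N_G[u] ⊆ N_G[v], then I(G) is homotopy equivalent to the wedge I(G − v) ∨ Σ I(G − N_G[v]), where Σ denotes unreduced suspension. -/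
open scoped Classical

/-!
Write `X = |I(G)|`, `D = |I(G - v)|`, `L = |I(G - N[v])|`, and `t = f v` for a point `f` of `X`.
Since `N[u] ⊆ N[v]`, the vertex `u` is adjacent to no vertex of `L`, so the cone `C_u L` lies in
`D`; the points with `t > 0` form the cone `C_v L`, so `X = D ∪ C_v L` and the two cones make up a
copy of `ΣL` in `X`. The map `φ : X → D ∨ ΣL` moves the mass of `v` onto `u` while `t ≤ 1/2`
(reaching the wedge point `δ_u` at `t = 1/2`) and then runs up the suspension; `ψ` includes `D`
and maps `ΣL` onto `C_u L ∪ C_v L`. Both composites move points only along the segments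
`δ_u – g – δ_v` (`g ∈ L`) or around the loop `δ_u → g → δ_u` in `C_u L ⊆ D`, which gives explicit
homotopies. Continuity on `X` is checked on `(L × I) ⊕ D ⊕ {δ_v} → X`, a quotient map because
its source is compact and `X` is Hausdorff.
-/

open Function Set Topology
open scoped unitInterval

noncomputable section

section Realization

variable {V : Type} [Fintype V]

theorem isClosed_setOf_exists_face (Δ : Finset V → Prop) :
    IsClosed {f : V → ℝ | ∃ F : Finset V, Δ F ∧ ∀ v, f v ≠ 0 → v ∈ F} := by
  have : {f : V → ℝ | ∃ F : Finset V, Δ F ∧ ∀ v, f v ≠ 0 → v ∈ F} =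
      ⋃ F ∈ {F : Finset V | Δ F}, ⋂ v ∈ (↑F : Set V)ᶜ, {f | f v = 0} := by
    ext f
    simp only [mem_ofPred_eq, mem_iUnion, mem_iInter, mem_compl_iff, Finset.mem_coe, exists_prop]
    exact exists_congr fun F => and_congr_right fun _ => forall_congr' fun v => not_imp_comm
  rw [this]
  exact (toFinite _).isClosed_biUnion fun F _ =>
    isClosed_biInter fun v _ => isClosed_eq (continuous_apply v) continuous_const

instance (Δ : Finset V → Prop) : CompactSpace (cxSpace Δ) :=
  isCompact_iff_compactSpace.mp <|
    (isCompact_stdSimplex ℝ V).inter_left (isClosed_setOf_exists_face Δ)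

theorem eq_pi_single_of_apply_eq_one {f : V → ℝ} (hf : f ∈ stdSimplex ℝ V) {a : V}
    (ha : f a = 1) : f = Pi.single a 1 := by
  have hrest : ∑ w ∈ Finset.univ.erase a, f w = 0 := by
    linarith [Finset.add_sum_erase Finset.univ f (Finset.mem_univ a), hf.2]
  funext w
  rcases eq_or_ne w a with rfl | hw
  · simp [ha]
  · rw [Pi.single_eq_of_ne hw]
    exact (Finset.sum_eq_zero_iff_of_nonneg fun i _ => hf.1 i).1 hrest w (by simp [hw])

variable {G : SimpleGraph V} {f : V → ℝ}

theorem exists_indepFaces_iff :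
    (∃ F, indepFaces G F ∧ ∀ w, f w ≠ 0 → w ∈ F) ↔ G.IsIndepSet (support f) := by
  constructor
  · rintro ⟨F, hF, hsub⟩ a ha b hb -
    exact hF a (hsub a ha) b (hsub b hb)
  · intro h
    refine ⟨Finset.univ.filter (f · ≠ 0), fun a ha b hb hab => ?_, by simp⟩
    simp only [Finset.mem_filter, Finset.mem_univ, true_and] at ha hb
    exact h ha hb (G.ne_of_adj hab) hab

theorem exists_restrictC_indepFaces_iff {S : Set V} :
    (∃ F, restrictC (indepFaces G) S F ∧ ∀ w, f w ≠ 0 → w ∈ F) ↔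
      support f ⊆ S ∧ G.IsIndepSet (support f) := by
  rw [← exists_indepFaces_iff]
  constructor
  · rintro ⟨F, ⟨hFS, hF⟩, hsub⟩
    exact ⟨fun w hw => hFS (hsub w hw), F, hF, hsub⟩
  · rintro ⟨hS, F, hF, hsub⟩
    refine ⟨F.filter (f · ≠ 0), ⟨fun w hw => hS ?_, fun a ha b hb => ?_⟩, fun w hw => ?_⟩
    · exact (Finset.mem_filter.1 hw).2
    · exact hF a (Finset.mem_filter.1 ha).1 b (Finset.mem_filter.1 hb).1
    · simp [hsub w hw, hw]

end Realization

section Mix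

variable {V : Type} {u v w : V}

def mix (u v : V) (f : V → ℝ) (a b c : ℝ) : V → ℝ :=
  fun w => if w = v then b else c * f w + if w = u then a else 0

variable {f : V → ℝ} {a b c : ℝ}

@[simp]
theorem mix_apply_right : mix u v f a b c v = b := if_pos rfl

theorem sum_mix [Fintype V] (huv : u ≠ v) (hf : ∑ w, f w = 1) :
    ∑ w, mix u v f a b c w = a + b + c * (1 - f v) := by
  have hsplit : ∀ g : V → ℝ, ∑ w, g w = g v + ∑ w ∈ Finset.univ.erase v, g w := fun g =>
    (Finset.add_sum_erase _ _ (Finset.mem_univ v)).symm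
  have hf' : ∑ w ∈ Finset.univ.erase v, f w = 1 - f v := by linarith [hsplit f]
  have hoff : ∀ w ∈ Finset.univ.erase v, mix u v f a b c w = c * f w + if w = u then a else 0 :=
    fun w hw => if_neg (Finset.ne_of_mem_erase hw)
  rw [hsplit, mix_apply_right, Finset.sum_congr rfl hoff, Finset.sum_add_distrib,
    ← Finset.mul_sum, hf', Finset.sum_ite_eq' _ u,
    if_pos (Finset.mem_erase.2 ⟨huv, Finset.mem_univ u⟩)]
  ring

theorem mix_mem_stdSimplex [Fintype V] (huv : u ≠ v) (hf : f ∈ stdSimplex ℝ V) (ha : 0 ≤ a)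
    (hb : 0 ≤ b) (hc : 0 ≤ c) (hsum : a + b + c * (1 - f v) = 1) :
    mix u v f a b c ∈ stdSimplex ℝ V := by
  refine ⟨fun w => ?_, (sum_mix huv hf.2).trans hsum⟩
  have := mul_nonneg hc (hf.1 w)
  unfold mix
  split_ifs <;> linarith

theorem mix_mix {a' b' c' : ℝ} :
    mix u v (mix u v f a b c) a' b' c' = mix u v f (c' * a + a') b' (c' * c) := by
  funext w
  unfold mix
  split_ifs <;> ring

theorem mix_eq_self (hb : f v = b) : mix u v f 0 b 1 = f := by
  funext w
  unfold mix
  split_ifs with h <;> simp [h, hb]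

theorem mix_eq_pi_single_right : mix u v f 0 1 0 = Pi.single v 1 := by
  funext w
  unfold mix
  split_ifs with h <;> simp [h]

theorem mix_eq_pi_single_left (huv : u ≠ v) : mix u v f 1 0 0 = Pi.single u 1 := by
  funext w
  unfold mix
  split_ifs with h h' <;> simp_all

theorem continuous_mix {P : Type} [TopologicalSpace P] {f : P → V → ℝ} {a b c : P → ℝ}
    (hf : Continuous f) (ha : Continuous a) (hb : Continuous b) (hc : Continuous c) :
    Continuous fun p => mix u v (f p) (a p) (b p) (c p) := by
  refine continuous_pi fun w => ?_
  unfold mix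
  split_ifs
  · exact hb
  · exact (hc.mul ((continuous_apply w).comp hf)).add ha
  · exact (hc.mul ((continuous_apply w).comp hf)).add continuous_const

theorem mem_support_mix (hw : w ∈ support (mix u v f a b c)) :
    (w = v ∧ b ≠ 0) ∨ (w ≠ v ∧ c ≠ 0 ∧ f w ≠ 0) ∨ (w = u ∧ a ≠ 0) := by
  simp only [mem_support, mix] at hw
  split_ifs at hw with hv hu
  · exact Or.inl ⟨hv, hw⟩
  · by_cases h : c * f w = 0
    · exact Or.inr (Or.inr ⟨hu, by simpa [h] using hw⟩)
    · exact Or.inr (Or.inl ⟨hv, left_ne_zero_of_mul h, right_ne_zero_of_mul h⟩)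
  · simp only [add_zero] at hw
    exact Or.inr (Or.inl ⟨hv, left_ne_zero_of_mul hw, right_ne_zero_of_mul hw⟩)

end Mix

section Graph

variable {V : Type} {G : SimpleGraph V} {u v : V}

/-- `v` dominates `u`: `u ≠ v` and `N[u] ⊆ N[v]`. -/
structure Dominates (G : SimpleGraph V) (v u : V) : Prop where
  adj : G.Adj v u
  adj_of_adj ⦃w : V⦄ : G.Adj u w → w ≠ v → G.Adj v w

theorem Dominates.of_closedNbhd_subset (huv : u ≠ v)
    (h : (insert u (G.neighborSet u) : Set V) ⊆ insert v (G.neighborSet v)) :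
    Dominates G v u where
  adj := (h (mem_insert u _)).resolve_left huv
  adj_of_adj _ huw hwv := (h (mem_insert_of_mem u huw)).resolve_left hwv

theorem Dominates.ne (hd : Dominates G v u) : u ≠ v := (G.ne_of_adj hd.adj).symm

theorem SimpleGraph.IsIndepSet.not_adj_of_apply_ne_zero {f : V → ℝ}
    (hf : G.IsIndepSet (Function.support f)) (hv : f v ≠ 0) :
    ∀ w ∈ Function.support f, ¬ G.Adj v w :=
  fun _ hw hadj => hf hv hw (G.ne_of_adj hadj) hadj

theorem Dominates.isIndepSet_support_mix (hd : Dominates G v u) {f : V → ℝ} {a b c : ℝ}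
    (hf : G.IsIndepSet (support f)) (hab : a = 0 ∨ b = 0)
    (havoid : a ≠ 0 ∨ b ≠ 0 → ∀ w ∈ support f, ¬ G.Adj v w) :
    G.IsIndepSet (support (mix u v f a b c)) := by
  have hu : ∀ w ∈ support f, w ≠ v → a ≠ 0 → ¬ G.Adj u w := fun w hw hwv ha hadj =>
    havoid (Or.inl ha) w hw (hd.adj_of_adj hadj hwv)
  have hv : ∀ w ∈ support f, b ≠ 0 → ¬ G.Adj v w := fun w hw hb => havoid (Or.inr hb) w hw
  have hab' : a ≠ 0 → b ≠ 0 → False := fun ha hb => hab.elim ha hb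
  intro x hx y hy hxy hadj
  rcases mem_support_mix hx with ⟨rfl, hbx⟩ | ⟨hxv, -, hfx⟩ | ⟨rfl, hax⟩ <;>
  rcases mem_support_mix hy with ⟨rfl, hby⟩ | ⟨hyv, -, hfy⟩ | ⟨rfl, hay⟩
  all_goals first
    | exact hxy rfl
    | exact hf hfx hfy hxy hadj
    | exact hv _ hfy hbx hadj
    | exact hv _ hfx hby hadj.symm
    | exact hu _ hfy hyv hax hadj
    | exact hu _ hfx hxv hay hadj.symm
    | exact hab' hax hby
    | exact hab' hay hbx

end Graph

section Spaces

variable {V : Type} [Fintype V]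

/-- `|I(G)|` -/
abbrev IndepSpace (G : SimpleGraph V) : Type := cxSpace (indepFaces G)

/-- `|I(G - v)|` -/
abbrev IndepSpaceDel (G : SimpleGraph V) (v : V) : Type :=
  cxSpace (restrictC (indepFaces G) {w | w ≠ v})

/-- `|I(G - N[v])|` -/
abbrev IndepSpaceLink (G : SimpleGraph V) (v : V) : Type :=
  cxSpace (restrictC (indepFaces G) {w | w ≠ v ∧ ¬ G.Adj v w})

variable {G : SimpleGraph V} {v : V}

theorem cxSpace.mem_stdSimplex {Δ : Finset V → Prop} (x : cxSpace Δ) : x.1 ∈ stdSimplex ℝ V :=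
  x.2.2

def IndepSpace.mk (f : V → ℝ) (hind : G.IsIndepSet (support f)) (hf : f ∈ stdSimplex ℝ V) :
    IndepSpace G :=
  ⟨f, exists_indepFaces_iff.2 hind, hf⟩

@[simp] theorem IndepSpace.mk_val (f : V → ℝ) (h₁ h₂) : (IndepSpace.mk (G := G) f h₁ h₂).1 = f :=
  rfl

theorem IndepSpace.isIndepSet (x : IndepSpace G) : G.IsIndepSet (support x.1) :=
  exists_indepFaces_iff.1 x.2.1

def IndepSpace.vertex (G : SimpleGraph V) (w : V) : IndepSpace G :=
  .mk (Pi.single w 1) ((subsingleton_singleton.anti Pi.support_single_subset).pairwise _)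
    (single_mem_stdSimplex ℝ w)

@[simp] theorem IndepSpace.vertex_val (w : V) : (IndepSpace.vertex G w).1 = Pi.single w 1 := rfl

def IndepSpaceDel.mk (f : V → ℝ) (hv : f v = 0) (hind : G.IsIndepSet (support f))
    (hf : f ∈ stdSimplex ℝ V) : IndepSpaceDel G v :=
  ⟨f, exists_restrictC_indepFaces_iff.2 ⟨fun _ hw hwv => hw (hwv ▸ hv), hind⟩, hf⟩

@[simp] theorem IndepSpaceDel.mk_val (f : V → ℝ) (h₀ h₁ h₂) :
    (IndepSpaceDel.mk (G := G) (v := v) f h₀ h₁ h₂).1 = f :=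
  rfl

theorem IndepSpaceDel.isIndepSet (x : IndepSpaceDel G v) : G.IsIndepSet (support x.1) :=
  (exists_restrictC_indepFaces_iff.1 x.2.1).2

theorem IndepSpaceDel.apply_self (x : IndepSpaceDel G v) : x.1 v = 0 :=
  not_ne_iff.1 fun h => (exists_restrictC_indepFaces_iff.1 x.2.1).1 h rfl

def IndepSpaceDel.toIndepSpace (x : IndepSpaceDel G v) : IndepSpace G :=
  .mk x.1 x.isIndepSet (cxSpace.mem_stdSimplex x)

@[simp] theorem IndepSpaceDel.toIndepSpace_val (x : IndepSpaceDel G v) : x.toIndepSpace.1 = x.1 :=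
  rfl

theorem IndepSpaceDel.continuous_toIndepSpace :
    Continuous (IndepSpaceDel.toIndepSpace : IndepSpaceDel G v → IndepSpace G) :=
  continuous_induced_rng.2 continuous_subtype_val

def IndepSpaceLink.mk (f : V → ℝ) (hv : f v = 0) (hN : ∀ w ∈ support f, ¬ G.Adj v w)
    (hind : G.IsIndepSet (support f)) (hf : f ∈ stdSimplex ℝ V) : IndepSpaceLink G v :=
  ⟨f, exists_restrictC_indepFaces_iff.2 ⟨fun _ hw => ⟨fun hwv => hw (hwv ▸ hv), hN _ hw⟩, hind⟩,
    hf⟩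

@[simp] theorem IndepSpaceLink.mk_val (f : V → ℝ) (h₀ h₁ h₂ h₃) :
    (IndepSpaceLink.mk (G := G) (v := v) f h₀ h₁ h₂ h₃).1 = f :=
  rfl

theorem IndepSpaceLink.isIndepSet (x : IndepSpaceLink G v) : G.IsIndepSet (support x.1) :=
  (exists_restrictC_indepFaces_iff.1 x.2.1).2

theorem IndepSpaceLink.apply_self (x : IndepSpaceLink G v) : x.1 v = 0 :=
  not_ne_iff.1 fun h => ((exists_restrictC_indepFaces_iff.1 x.2.1).1 h).1 rfl

theorem IndepSpaceLink.not_adj (x : IndepSpaceLink G v) : ∀ w ∈ support x.1, ¬ G.Adj v w :=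
  fun _ hw => ((exists_restrictC_indepFaces_iff.1 x.2.1).1 hw).2

end Spaces

namespace Susp

variable {X Y : Type} [TopologicalSpace X]

def mk (x : X) (s : I) : Susp X := Quot.mk _ (Sum.inl (x, s))

def south : Susp X := Quot.mk _ (Sum.inr false)

def north : Susp X := Quot.mk _ (Sum.inr true)

theorem mk_zero (x : X) : mk x 0 = south := Quot.sound (Or.inl ⟨rfl, rfl⟩)

theorem mk_one (x : X) : mk x 1 = north := Quot.sound (Or.inr ⟨rfl, rfl⟩)

theorem continuous_mk : Continuous fun p : X × I => mk p.1 p.2 :=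
  continuous_quot_mk.comp continuous_inl

def lift (F : X × I → Y) (y₀ y₁ : Y) (h₀ : ∀ x, F (x, 0) = y₀) (h₁ : ∀ x, F (x, 1) = y₁) :
    Susp X → Y :=
  Quot.lift (Sum.elim F fun b => bif b then y₁ else y₀) <| by
    rintro (⟨x, s⟩ | _) (_ | _) h <;> simp only [suspRel] at h
    rcases h with ⟨rfl, rfl⟩ | ⟨rfl, rfl⟩ <;> simp [h₀, h₁]

theorem continuous_lift [TopologicalSpace Y] {F : X × I → Y} (hF : Continuous F) {y₀ y₁ : Y}
    {h₀ h₁} :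
    Continuous (lift F y₀ y₁ h₀ h₁) :=
  continuous_quot_lift _ (hF.sumElim continuous_of_discreteTopology)

theorem ind {P : Susp X → Prop} (hmk : ∀ x s, P (mk x s)) (hs : P south) (hn : P north) :
    ∀ z, P z :=
  Quot.ind fun | .inl (x, s) => hmk x s | .inr false => hs | .inr true => hn

end Susp

namespace Wedge

variable {X Y Z : Type} [TopologicalSpace X] [TopologicalSpace Y] {x₀ : X} {y₀ : Y}

def inl (x : X) : Wedge X Y x₀ y₀ := Quot.mk _ (Sum.inl x)

def inr (y : Y) : Wedge X Y x₀ y₀ := Quot.mk _ (Sum.inr y)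

theorem inl_base : (inl x₀ : Wedge X Y x₀ y₀) = inr y₀ := Quot.sound ⟨rfl, rfl⟩

theorem continuous_inl : Continuous (inl : X → Wedge X Y x₀ y₀) :=
  continuous_quot_mk.comp _root_.continuous_inl

theorem continuous_inr : Continuous (inr : Y → Wedge X Y x₀ y₀) :=
  continuous_quot_mk.comp _root_.continuous_inr

def lift (F : X → Z) (F' : Y → Z) (h : F x₀ = F' y₀) : Wedge X Y x₀ y₀ → Z :=
  Quot.lift (Sum.elim F F') fun _ _ ⟨hp, hq⟩ => hp ▸ hq ▸ h

theorem continuous_lift [TopologicalSpace Z] {F : X → Z} {F' : Y → Z} (hF : Continuous F)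
    (hF' : Continuous F') {h} :
    Continuous (lift F F' h : Wedge X Y x₀ y₀ → Z) :=
  continuous_quot_lift _ (hF.sumElim hF')

theorem ind {P : Wedge X Y x₀ y₀ → Prop} (hl : ∀ x, P (inl x)) (hr : ∀ y, P (inr y)) : ∀ z, P z :=
  Quot.ind fun | .inl x => hl x | .inr y => hr y

end Wedge

section Reparametrization

/-! At `τ = 0` the suspension coordinates `s ∈ [0, 3/4]` are those where `φ ∘ ψ` runs around the
loop `δ_u → g → δ_u` in `D`. The homotopies shrink this interval to `[0, 3(1-τ)/4]`, on which
`loopWeight τ` is the weight of `g`, and `stretch τ` maps the rest affinely onto `[0, 1]`. -/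

def loopWeight (τ s : ℝ) : ℝ := min (2 * s) (3 * (1 - τ) - 4 * s)

def stretch (τ s : ℝ) : ℝ := (4 * s - 3 * (1 - τ)) / (1 + 3 * τ)

def slideCoord (τ t : ℝ) : ℝ := if t ≤ 3 * (1 - τ) / 4 then -loopWeight τ t else stretch τ t

variable {τ s : ℝ}

theorem loopWeight_le_one (hτ : 0 ≤ τ) : loopWeight τ s ≤ 1 := by
  unfold loopWeight
  rcases le_total s (1 / 2) with h | h
  · exact (min_le_left _ _).trans (by linarith)
  · exact (min_le_right _ _).trans (by linarith)

theorem loopWeight_nonneg (hs : 0 ≤ s) (h : s ≤ 3 * (1 - τ) / 4) : 0 ≤ loopWeight τ s :=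
  le_min (by linarith) (by linarith)

theorem loopWeight_eq_zero (hs : 0 ≤ s) (h : s = 3 * (1 - τ) / 4) : loopWeight τ s = 0 :=
  min_eq_right_iff.2 (by linarith) |>.trans (by linarith)

theorem stretch_nonneg (hτ : 0 ≤ τ) (h : 3 * (1 - τ) / 4 ≤ s) : 0 ≤ stretch τ s :=
  div_nonneg (by linarith) (by linarith)

theorem stretch_le_one (hτ : 0 ≤ τ) (hs : s ≤ 1) : stretch τ s ≤ 1 :=
  (div_le_one (by linarith)).2 (by linarith)

theorem stretch_eq_zero (h : s = 3 * (1 - τ) / 4) : stretch τ s = 0 := by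
  rw [stretch, h]; ring

theorem stretch_self_one (hτ : 0 ≤ τ) : stretch τ 1 = 1 :=
  (div_eq_one_iff_eq (by linarith)).2 (by ring)

theorem continuous_stretch : Continuous fun p : I × ℝ => stretch p.1 p.2 :=
  Continuous.div (by fun_prop) (by fun_prop) fun p => by linarith [p.1.2.1]

theorem continuous_loopWeight : Continuous fun p : ℝ × ℝ => loopWeight p.1 p.2 := by
  unfold loopWeight; fun_prop

variable {t : ℝ}

theorem abs_slideCoord_le (hτ : 0 ≤ τ) (ht : t ∈ I) : |slideCoord τ t| ≤ 1 := by
  unfold slideCoord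
  split_ifs with h
  · rw [abs_neg, abs_of_nonneg (loopWeight_nonneg ht.1 h)]
    exact loopWeight_le_one hτ
  · rw [abs_of_nonneg (stretch_nonneg hτ (not_le.1 h).le)]
    exact stretch_le_one hτ ht.2

theorem slideCoord_zero_right (hτ : τ ≤ 1) : slideCoord τ 0 = 0 := by
  rw [slideCoord, if_pos (by linarith)]
  simp only [loopWeight, mul_zero, sub_zero]
  rw [min_eq_left (by linarith), neg_zero]

theorem slideCoord_one_right (hτ : 0 ≤ τ) : slideCoord τ 1 = 1 := by
  rw [slideCoord, if_neg (by linarith), stretch_self_one hτ]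

theorem slideCoord_one_left (ht : 0 ≤ t) : slideCoord 1 t = t := by
  unfold slideCoord loopWeight stretch
  split_ifs with h
  · have : t = 0 := by linarith
    simp [this]
  · ring

theorem slideCoord_zero_left_of_le (h : t ≤ 1 / 2) : slideCoord 0 t = -(2 * t) := by
  rw [slideCoord, if_pos (by linarith), loopWeight, min_eq_left (by linarith)]

theorem slideCoord_zero_left_of_ge (h : 1 / 2 ≤ t) : slideCoord 0 t = 4 * t - 3 := by
  unfold slideCoord loopWeight stretch
  split_ifs
  · rw [min_eq_right (by linarith)]; ring
  · ring

theorem continuous_slideCoord : Continuous fun p : I × I => slideCoord p.1 p.2 := by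
  have h₁ : Continuous fun p : I × I => (p.1 : ℝ) := continuous_subtype_val.comp continuous_fst
  have h₂ : Continuous fun p : I × I => (p.2 : ℝ) := continuous_subtype_val.comp continuous_snd
  refine Continuous.if_le (continuous_loopWeight.comp (h₁.prodMk h₂)).neg
    (continuous_stretch.comp (continuous_fst.prodMk h₂)) h₂ (by fun_prop) fun p hp => ?_
  rw [loopWeight_eq_zero p.2.2.1 hp, stretch_eq_zero hp, neg_zero]

end Reparametrization

def clampI (x : ℝ) : I := projIcc 0 1 zero_le_one x

theorem coe_clampI {x : ℝ} (h₀ : 0 ≤ x) (h₁ : x ≤ 1) : (clampI x : ℝ) = x := by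
  simp [clampI, projIcc_of_mem _ ⟨h₀, h₁⟩]

theorem clampI_of_nonpos {x : ℝ} (h : x ≤ 0) : clampI x = 0 := projIcc_of_le_left _ h

theorem clampI_of_one_le {x : ℝ} (h : 1 ≤ x) : clampI x = 1 := projIcc_of_right_le _ h

theorem continuous_clampI : Continuous clampI := continuous_projIcc (h := zero_le_one)

theorem continuous_prod_sum_dom {X Y Z W : Type} [TopologicalSpace X] [TopologicalSpace Y]
    [TopologicalSpace Z] [TopologicalSpace W] {F : Z × (X ⊕ Y) → W}
    (h₁ : Continuous fun p : Z × X => F (p.1, .inl p.2))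
    (h₂ : Continuous fun p : Z × Y => F (p.1, .inr p.2)) : Continuous F := by
  convert (h₁.sumElim h₂).comp (Homeomorph.prodSumDistrib (X := Z) (Y := X) (Z := Y)).continuous
  funext p
  rcases p with ⟨z, x | y⟩ <;> rfl

namespace Dominates

variable {V : Type} [Fintype V] {G : SimpleGraph V} {u v : V}

local notation "𝕏" => IndepSpace G
local notation "𝔻" => IndepSpaceDel G v
local notation "𝕃" => IndepSpaceLink G v

theorem isIndepSet_support_mix_link (hd : Dominates G v u) (g : 𝕃) {a b c : ℝ}
    (hab : a = 0 ∨ b = 0) : G.IsIndepSet (support (mix u v g.1 a b c)) :=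
  hd.isIndepSet_support_mix g.isIndepSet hab fun _ => g.not_adj

variable (hd : Dominates G v u)

def vertexDel : 𝔻 :=
  .mk (Pi.single u 1) (Pi.single_eq_of_ne hd.ne.symm _) (IndepSpace.vertex G u).isIndepSet
    (single_mem_stdSimplex ℝ u)

local notation "𝕎" => Wedge 𝔻 (Susp 𝕃) (vertexDel hd) Susp.south

@[simp] theorem vertexDel_val : (vertexDel hd).1 = Pi.single u 1 := rfl

def uCone (g : 𝕃) (a : I) : 𝔻 :=
  .mk (mix u v g.1 a 0 (1 - a)) mix_apply_right (hd.isIndepSet_support_mix_link g (Or.inr rfl))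
    (mix_mem_stdSimplex hd.ne (cxSpace.mem_stdSimplex g) a.2.1 le_rfl (by linarith [a.2.2])
      (by rw [g.apply_self]; ring))

@[simp] theorem uCone_val (g : 𝕃) (a : I) : (uCone hd g a).1 = mix u v g.1 a 0 (1 - a) := rfl

def vCone (g : 𝕃) (t : I) : 𝕏 :=
  .mk (mix u v g.1 0 t (1 - t)) (hd.isIndepSet_support_mix_link g (Or.inl rfl))
    (mix_mem_stdSimplex hd.ne (cxSpace.mem_stdSimplex g) le_rfl t.2.1 (by linarith [t.2.2])
      (by rw [g.apply_self]; ring))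

@[simp] theorem vCone_val (g : 𝕃) (t : I) : (vCone hd g t).1 = mix u v g.1 0 t (1 - t) := rfl

theorem vCone_apply_self (g : 𝕃) (t : I) : (vCone hd g t).1 v = t := mix_apply_right

theorem uCone_zero_val (g : 𝕃) : (uCone hd g 0).1 = g.1 := by
  simpa using mix_eq_self (u := u) g.apply_self

theorem vCone_zero (g : 𝕃) : vCone hd g 0 = (uCone hd g 0).toIndepSpace :=
  Subtype.ext <| by
    rw [IndepSpaceDel.toIndepSpace_val, uCone_zero_val, vCone_val]
    simpa using mix_eq_self (u := u) g.apply_self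

theorem uCone_one (g : 𝕃) : uCone hd g 1 = vertexDel hd :=
  Subtype.ext <| by simpa [uCone] using mix_eq_pi_single_left hd.ne

theorem vCone_one (g : 𝕃) : vCone hd g 1 = IndepSpace.vertex G v :=
  Subtype.ext <| by simpa [vCone] using mix_eq_pi_single_right (u := u) (f := g.1)

theorem continuous_uCone : Continuous fun p : 𝕃 × I => uCone hd p.1 p.2 := by
  refine continuous_induced_rng.2 (continuous_mix ?_ ?_ continuous_const ?_) <;> fun_prop

theorem continuous_vCone : Continuous fun p : 𝕃 × I => vCone hd p.1 p.2 := by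
  refine continuous_induced_rng.2 (continuous_mix ?_ continuous_const ?_ ?_) <;> fun_prop

def conePath (g : 𝕃) (y : ℝ) : 𝕏 :=
  if y ≤ 0 then (uCone hd g (clampI (-y))).toIndepSpace else vCone hd g (clampI y)

theorem continuous_conePath : Continuous fun p : 𝕃 × ℝ => conePath hd p.1 p.2 := by
  refine Continuous.if_le ?_ ?_ continuous_snd continuous_const fun p hp => ?_
  · exact IndepSpaceDel.continuous_toIndepSpace.comp <|
      (continuous_uCone hd).comp (continuous_fst.prodMk (continuous_clampI.comp continuous_snd.neg))
  · exact (continuous_vCone hd).comp (continuous_fst.prodMk (continuous_clampI.comp continuous_snd))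
  · simp [hp, clampI_of_nonpos, vCone_zero]

def suspToIndep : Susp 𝕃 → 𝕏 :=
  Susp.lift (fun p => conePath hd p.1 (2 * p.2 - 1)) (IndepSpace.vertex G u)
    (IndepSpace.vertex G v)
    (fun g => by simp [conePath, clampI_of_one_le, uCone_one]; rfl)
    (fun g => by norm_num [conePath, clampI_of_one_le, vCone_one])

def wedgeToIndep : C(𝕎, 𝕏) where
  toFun := Wedge.lift IndepSpaceDel.toIndepSpace (suspToIndep hd) rfl
  continuous_toFun := Wedge.continuous_lift IndepSpaceDel.continuous_toIndepSpace
    (Susp.continuous_lift <| (continuous_conePath hd).comp <|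
      continuous_fst.prodMk
        ((continuous_const.mul continuous_subtype_val.snd').sub continuous_const))

def pushToDel (f : 𝕏) (h : f.1 v ≤ 1 / 2) : 𝔻 :=
  .mk (mix u v f.1 (2 * f.1 v) 0 ((1 - 2 * f.1 v) / (1 - f.1 v))) mix_apply_right
    (hd.isIndepSet_support_mix f.isIndepSet (Or.inr rfl) fun h' =>
      f.isIndepSet.not_adj_of_apply_ne_zero fun h0 => by simp [h0] at h')
    (mix_mem_stdSimplex hd.ne (cxSpace.mem_stdSimplex f)
      (by linarith [(cxSpace.mem_stdSimplex f).1 v]) le_rfl (div_nonneg (by linarith) (by linarith))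
      (by rw [div_mul_cancel₀ _ (by linarith : (1 : ℝ) - f.1 v ≠ 0)]; ring))

def toLink (f : 𝕏) (h₀ : 0 < f.1 v) (h₁ : f.1 v < 1) : 𝕃 :=
  .mk (mix u v f.1 0 0 (1 - f.1 v)⁻¹) mix_apply_right
    (fun w hw => by
      rcases mem_support_mix hw with ⟨-, hb⟩ | ⟨-, -, hfw⟩ | ⟨-, ha⟩
      · exact absurd rfl hb
      · exact f.isIndepSet.not_adj_of_apply_ne_zero h₀.ne' w hfw
      · exact absurd rfl ha)
    (hd.isIndepSet_support_mix f.isIndepSet (Or.inl rfl) (by simp))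
    (mix_mem_stdSimplex hd.ne (cxSpace.mem_stdSimplex f) le_rfl le_rfl
      (inv_nonneg.2 (by linarith)) (by rw [inv_mul_cancel₀ (sub_pos.2 h₁).ne']; ring))

def indepToWedgeFun (f : 𝕏) : 𝕎 :=
  if h : f.1 v ≤ 1 / 2 then Wedge.inl (pushToDel hd f h)
  else if h' : f.1 v < 1 then
    Wedge.inr (Susp.mk (toLink hd f (by linarith) h') (clampI (2 * f.1 v - 1)))
  else Wedge.inr Susp.north

def cover : (𝕃 × I) ⊕ 𝔻 ⊕ Unit → 𝕏 :=
  Sum.elim (fun p => vCone hd p.1 p.2)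
    (Sum.elim IndepSpaceDel.toIndepSpace fun _ => IndepSpace.vertex G v)

theorem toLink_vCone (g : 𝕃) (t : I) (h₀ h₁) : toLink hd (vCone hd g t) h₀ h₁ = g := by
  have ht : (t : ℝ) < 1 := by simpa using h₁
  refine Subtype.ext ?_
  simp only [toLink, IndepSpaceLink.mk_val, vCone_val, mix_mix, mix_apply_right]
  rw [inv_mul_cancel₀ (sub_pos.2 ht).ne', mul_zero, add_zero]
  exact mix_eq_self g.apply_self

theorem surjective_cover : Surjective (cover hd) := by
  intro f
  have hf := cxSpace.mem_stdSimplex f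
  rcases (hf.1 v).eq_or_lt with h₀ | h₀
  · exact ⟨.inr (.inl (.mk f.1 h₀.symm f.isIndepSet hf)), rfl⟩
  rcases (mem_Icc_of_mem_stdSimplex hf v).2.lt_or_eq with h₁ | h₁
  · refine ⟨.inl (toLink hd f h₀ h₁, ⟨f.1 v, h₀.le, h₁.le⟩), Subtype.ext ?_⟩
    simp only [cover, Sum.elim_inl, vCone_val, toLink, IndepSpaceLink.mk_val, mix_mix]
    rw [mul_inv_cancel₀ (sub_pos.2 h₁).ne', mul_zero, add_zero]
    exact mix_eq_self rfl
  · exact ⟨.inr (.inr ()), Subtype.ext (eq_pi_single_of_apply_eq_one hf h₁).symm⟩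

theorem continuous_cover : Continuous (cover hd) :=
  (continuous_vCone hd).sumElim
    (IndepSpaceDel.continuous_toIndepSpace.sumElim continuous_const)

theorem isQuotientMap_cover : IsQuotientMap (cover hd) :=
  .of_surjective_continuous (surjective_cover hd) (continuous_cover hd)

theorem indepToWedgeFun_vCone (g : 𝕃) (t : I) :
    indepToWedgeFun hd (vCone hd g t) =
      if (t : ℝ) ≤ 1 / 2 then Wedge.inl (uCone hd g (clampI (2 * t)))
      else Wedge.inr (Susp.mk g (clampI (2 * t - 1))) := by
  have htv : (vCone hd g t).1 v = t := mix_apply_right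
  rcases le_or_gt (t : ℝ) (1 / 2) with h | h
  · rw [indepToWedgeFun, dif_pos (htv ▸ h), if_pos h]
    refine congrArg Wedge.inl (Subtype.ext ?_)
    simp only [pushToDel, IndepSpaceDel.mk_val, vCone_val, uCone_val, mix_mix, htv,
      coe_clampI (by linarith [t.2.1] : (0:ℝ) ≤ 2 * t) (by linarith)]
    rw [div_mul_cancel₀ _ (by linarith : (1 : ℝ) - t ≠ 0), mul_zero, zero_add]
  rw [if_neg h.not_ge, indepToWedgeFun, dif_neg (by rw [htv]; exact h.not_ge)]
  rcases t.2.2.lt_or_eq with h₁ | h₁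
  · rw [dif_pos (htv ▸ h₁), toLink_vCone, htv]
  · rw [dif_neg (by rw [htv, h₁]; exact lt_irrefl 1), h₁,
      show (2 : ℝ) * 1 - 1 = 1 by norm_num, clampI_of_one_le le_rfl, Susp.mk_one]

theorem indepToWedgeFun_toIndepSpace (d : 𝔻) :
    indepToWedgeFun hd d.toIndepSpace = Wedge.inl d := by
  have hdv : d.toIndepSpace.1 v = 0 := d.apply_self
  rw [indepToWedgeFun, dif_pos (by rw [hdv]; norm_num)]
  refine congrArg Wedge.inl (Subtype.ext ?_)
  simp only [pushToDel, IndepSpaceDel.mk_val, IndepSpaceDel.toIndepSpace_val, hdv]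
  simpa using mix_eq_self (u := u) d.apply_self

theorem indepToWedgeFun_vertex :
    indepToWedgeFun hd (IndepSpace.vertex G v) = Wedge.inr Susp.north := by
  have h : (IndepSpace.vertex G v).1 v = 1 := by simp
  rw [indepToWedgeFun, dif_neg (by rw [h]; norm_num), dif_neg (by rw [h]; norm_num)]

theorem continuous_indepToWedgeFun : Continuous (indepToWedgeFun hd) := by
  rw [(isQuotientMap_cover hd).continuous_iff, continuous_sum_dom, continuous_sum_dom]
  refine ⟨?_, ?_, continuous_of_discreteTopology⟩
  · refine Continuous.congr ?_ fun p : 𝕃 × I => (indepToWedgeFun_vCone hd p.1 p.2).symm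
    refine Continuous.if_le ?_ ?_ (by fun_prop) continuous_const fun p hp => ?_
    · exact Wedge.continuous_inl.comp <| (continuous_uCone hd).comp <|
        continuous_fst.prodMk (continuous_clampI.comp (by fun_prop))
    · exact Wedge.continuous_inr.comp <| Susp.continuous_mk.comp <|
        continuous_fst.prodMk (continuous_clampI.comp (by fun_prop))
    · rw [hp, show (2 : ℝ) * (1 / 2) = 1 by norm_num, sub_self, clampI_of_one_le le_rfl,
        clampI_of_nonpos le_rfl, uCone_one, Susp.mk_zero]
      exact Wedge.inl_base
  · exact Wedge.continuous_inl.congr fun d => (indepToWedgeFun_toIndepSpace hd d).symm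

def indepToWedge : C(𝕏, 𝕎) := ⟨indepToWedgeFun hd, continuous_indepToWedgeFun hd⟩

/-- Moves `f` along its line through `δ_u` and `δ_v` to the signed coordinate `y`, where
`y = -1` is `δ_u`, `y = 1` is `δ_v`, and `y = f v` is `f` itself. -/
def slide (f : 𝕏) (y : ℝ) (hy : |y| ≤ 1) (h₀ : y ≠ 0 → f.1 v ≠ 0) (h₁ : f.1 v = 1 → y = 1) : 𝕏 :=
  .mk (mix u v f.1 (max 0 (-y)) (max 0 y) ((1 - |y|) / (1 - f.1 v)))
    (hd.isIndepSet_support_mix f.isIndepSet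
      (by rcases le_total 0 y with h | h <;> simp [h])
      fun h => f.isIndepSet.not_adj_of_apply_ne_zero <| h₀ fun hy0 => by simp [hy0] at h)
    (mix_mem_stdSimplex hd.ne (cxSpace.mem_stdSimplex f) (le_max_left _ _) (le_max_left _ _)
      (div_nonneg (by linarith) (by linarith [(mem_Icc_of_mem_stdSimplex
        (cxSpace.mem_stdSimplex f) v).2]))
      (by
        rcases eq_or_ne (f.1 v) 1 with ht | ht
        · simp [h₁ ht, ht]
        rw [div_mul_cancel₀ _ (sub_ne_zero.2 ht.symm)]
        rcases le_total 0 y with h | h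
        · simp [h, abs_of_nonneg h]
        · simp [h, abs_of_nonpos h]))

theorem slide_vCone (g : 𝕃) (t : I) (y : ℝ) (hy h₀ h₁) :
    slide hd (vCone hd g t) y hy h₀ h₁ = conePath hd g y := by
  have hmix : (slide hd (vCone hd g t) y hy h₀ h₁).1 =
      mix u v g.1 (max 0 (-y)) (max 0 y) (1 - |y|) := by
    simp only [slide, IndepSpace.mk_val, vCone_val, mix_mix, mix_apply_right, mul_zero, zero_add]
    rcases eq_or_ne (t : ℝ) 1 with ht | ht
    · simp [ht, h₁ (by simpa using ht)]
    · rw [div_mul_cancel₀ _ (sub_ne_zero.2 (Ne.symm ht))]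
  refine Subtype.ext (hmix.trans ?_)
  unfold conePath
  split_ifs with h
  · rw [IndepSpaceDel.toIndepSpace_val, uCone_val,
      coe_clampI (by linarith) (by linarith [neg_abs_le y])]
    simp [h, abs_of_nonpos h]
  · rw [vCone_val, coe_clampI (by linarith) (le_of_abs_le hy)]
    simp [(not_le.1 h).le, abs_of_pos (not_le.1 h)]

theorem slide_toIndepSpace (d : 𝔻) {y : ℝ} (hy0 : y = 0) (hy h₀ h₁) :
    slide hd d.toIndepSpace y hy h₀ h₁ = d.toIndepSpace := by
  subst hy0
  exact Subtype.ext <| by simpa [slide, d.apply_self] using mix_eq_self (u := u) d.apply_self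

theorem slide_vertex {y : ℝ} (hy1 : y = 1) (hy h₀ h₁) :
    slide hd (IndepSpace.vertex G v) y hy h₀ h₁ = IndepSpace.vertex G v := by
  subst hy1
  exact Subtype.ext <| by simpa [slide] using mix_eq_pi_single_right (u := u)

theorem conePath_coe (g : 𝕃) (t : I) : conePath hd g t = vCone hd g t := by
  unfold conePath
  split_ifs with h
  · have ht : t = 0 := Subtype.ext (le_antisymm h t.2.1)
    subst ht
    rw [Set.Icc.coe_zero, neg_zero, clampI_of_nonpos le_rfl, vCone_zero]
  · rw [clampI, projIcc_val]

def indepHomotopyFun (p : I × 𝕏) : 𝕏 :=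
  slide hd p.2 (slideCoord p.1 (p.2.1 v))
    (abs_slideCoord_le p.1.2.1 (mem_Icc_of_mem_stdSimplex (cxSpace.mem_stdSimplex p.2) v))
    (fun h h0 => h (by rw [h0, slideCoord_zero_right p.1.2.2]))
    (fun h1 => by rw [h1, slideCoord_one_right p.1.2.1])

theorem indepHomotopyFun_vCone (τ : I) (g : 𝕃) (t : I) :
    indepHomotopyFun hd (τ, vCone hd g t) = conePath hd g (slideCoord τ t) := by
  rw [indepHomotopyFun, slide_vCone, vCone_apply_self]

theorem indepHomotopyFun_toIndepSpace (τ : I) (d : 𝔻) :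
    indepHomotopyFun hd (τ, d.toIndepSpace) = d.toIndepSpace := by
  unfold indepHomotopyFun
  exact slide_toIndepSpace hd d (by rw [show d.toIndepSpace.1 v = 0 from d.apply_self,
    slideCoord_zero_right τ.2.2]) _ _ _

theorem indepHomotopyFun_vertex (τ : I) :
    indepHomotopyFun hd (τ, IndepSpace.vertex G v) = IndepSpace.vertex G v := by
  unfold indepHomotopyFun
  exact slide_vertex hd
    (by rw [IndepSpace.vertex_val, Pi.single_eq_same, slideCoord_one_right τ.2.1])
    _ _ _

theorem continuous_indepHomotopyFun : Continuous (indepHomotopyFun hd) := by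
  refine (isQuotientMap_cover hd).continuous_lift_prod_right <|
    continuous_prod_sum_dom ?_ (continuous_prod_sum_dom ?_ ?_)
  · refine Continuous.congr ?_ fun p : I × (𝕃 × I) =>
      (indepHomotopyFun_vCone hd p.1 p.2.1 p.2.2).symm
    exact (continuous_conePath hd).comp <| continuous_snd.fst.prodMk <|
      continuous_slideCoord.comp (continuous_fst.prodMk continuous_snd.snd)
  · exact (IndepSpaceDel.continuous_toIndepSpace.comp continuous_snd).congr fun p =>
      (indepHomotopyFun_toIndepSpace hd p.1 p.2).symm
  · exact continuous_const.congr fun p => (indepHomotopyFun_vertex hd p.1).symm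

@[simp] theorem wedgeToIndep_inl (d : 𝔻) : wedgeToIndep hd (Wedge.inl d) = d.toIndepSpace := rfl

@[simp] theorem wedgeToIndep_mk (g : 𝕃) (s : I) :
    wedgeToIndep hd (Wedge.inr (Susp.mk g s)) = conePath hd g (2 * s - 1) := rfl

@[simp] theorem wedgeToIndep_north :
    wedgeToIndep hd (Wedge.inr Susp.north) = IndepSpace.vertex G v := rfl

theorem indepHomotopyFun_zero (f : 𝕏) :
    indepHomotopyFun hd (0, f) = wedgeToIndep hd (indepToWedge hd f) := by
  obtain ⟨⟨g, t⟩ | d | ⟨⟩, rfl⟩ := surjective_cover hd f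
  · change indepHomotopyFun hd (0, vCone hd g t) =
      wedgeToIndep hd (indepToWedgeFun hd (vCone hd g t))
    rw [indepHomotopyFun_vCone, indepToWedgeFun_vCone]
    rw [Set.Icc.coe_zero]
    split_ifs with h
    · rw [slideCoord_zero_left_of_le h, wedgeToIndep_inl, conePath,
        if_pos (by linarith [t.2.1]), neg_neg]
    · rw [slideCoord_zero_left_of_ge (not_le.1 h).le, wedgeToIndep_mk,
        coe_clampI (by linarith) (by linarith [t.2.2])]
      ring_nf
  · change indepHomotopyFun hd (0, d.toIndepSpace) =
      wedgeToIndep hd (indepToWedgeFun hd d.toIndepSpace)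
    rw [indepHomotopyFun_toIndepSpace, indepToWedgeFun_toIndepSpace, wedgeToIndep_inl]
  · change indepHomotopyFun hd (0, IndepSpace.vertex G v) =
      wedgeToIndep hd (indepToWedgeFun hd (IndepSpace.vertex G v))
    rw [indepHomotopyFun_vertex, indepToWedgeFun_vertex, wedgeToIndep_north]

theorem indepHomotopyFun_one (f : 𝕏) : indepHomotopyFun hd (1, f) = f := by
  obtain ⟨⟨g, t⟩ | d | ⟨⟩, rfl⟩ := surjective_cover hd f
  · exact (indepHomotopyFun_vCone hd 1 g t).trans <| by
      rw [Set.Icc.coe_one, slideCoord_one_left t.2.1, conePath_coe]; rfl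
  · exact indepHomotopyFun_toIndepSpace hd 1 d
  · exact indepHomotopyFun_vertex hd 1

def indepHomotopy :
    ((wedgeToIndep hd).comp (indepToWedge hd)).Homotopy (ContinuousMap.id 𝕏) where
  toFun := indepHomotopyFun hd
  continuous_toFun := continuous_indepHomotopyFun hd
  map_zero_left := indepHomotopyFun_zero hd
  map_one_left := indepHomotopyFun_one hd

def suspHomotopyFun (p : I × (𝕃 × I)) : 𝕎 :=
  if (p.2.2 : ℝ) ≤ 3 * (1 - p.1) / 4 then
    Wedge.inl (uCone hd p.2.1 (clampI (1 - loopWeight p.1 p.2.2)))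
  else Wedge.inr (Susp.mk p.2.1 (clampI (stretch p.1 p.2.2)))

theorem suspHomotopyFun_zero_right (τ : I) (g : 𝕃) :
    suspHomotopyFun hd (τ, (g, 0)) = Wedge.inr Susp.south := by
  have h0 : loopWeight τ 0 = 0 := min_eq_left (by linarith [τ.2.2]) |>.trans (mul_zero 2)
  simp only [suspHomotopyFun, Set.Icc.coe_zero]
  rw [if_pos (by linarith [τ.2.2]), h0, sub_zero, clampI_of_one_le le_rfl, uCone_one]
  exact Wedge.inl_base

theorem suspHomotopyFun_one_right (τ : I) (g : 𝕃) :
    suspHomotopyFun hd (τ, (g, 1)) = Wedge.inr Susp.north := by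
  simp only [suspHomotopyFun, Set.Icc.coe_one]
  rw [if_neg (by linarith [τ.2.1]), stretch_self_one τ.2.1, clampI_of_one_le le_rfl, Susp.mk_one]

theorem continuous_suspHomotopyFun : Continuous (suspHomotopyFun hd) := by
  have hτ : Continuous fun p : I × (𝕃 × I) => (p.1 : ℝ) :=
    continuous_subtype_val.comp continuous_fst
  have hs : Continuous fun p : I × (𝕃 × I) => (p.2.2 : ℝ) :=
    continuous_subtype_val.comp continuous_snd.snd
  refine Continuous.if_le ?_ ?_ hs (by fun_prop) fun p hp => ?_
  · exact Wedge.continuous_inl.comp <| (continuous_uCone hd).comp <| continuous_snd.fst.prodMk <|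
      continuous_clampI.comp (continuous_const.sub (continuous_loopWeight.comp (hτ.prodMk hs)))
  · exact Wedge.continuous_inr.comp <| Susp.continuous_mk.comp <| continuous_snd.fst.prodMk <|
      continuous_clampI.comp (continuous_stretch.comp (continuous_fst.prodMk hs))
  · rw [loopWeight_eq_zero p.2.2.2.1 hp, stretch_eq_zero hp, sub_zero, clampI_of_one_le le_rfl,
      clampI_of_nonpos le_rfl, uCone_one, Susp.mk_zero]
    exact Wedge.inl_base

def suspHomotopyCurve : Susp 𝕃 → C(I, 𝕎) :=
  Susp.lift (ContinuousMap.curry ⟨fun q : (𝕃 × I) × I => suspHomotopyFun hd (q.2, q.1),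
      (continuous_suspHomotopyFun hd).comp continuous_swap⟩)
    (.const I (Wedge.inr Susp.south)) (.const I (Wedge.inr Susp.north))
    (fun g => ContinuousMap.ext fun τ => suspHomotopyFun_zero_right hd τ g)
    (fun g => ContinuousMap.ext fun τ => suspHomotopyFun_one_right hd τ g)

def wedgeHomotopyCurve : C(𝕎, C(I, 𝕎)) where
  toFun := Wedge.lift (fun d => .const I (Wedge.inl d)) (suspHomotopyCurve hd)
    (ContinuousMap.ext fun _ => Wedge.inl_base)
  continuous_toFun :=
    Wedge.continuous_lift (ContinuousMap.continuous_const'.comp Wedge.continuous_inl)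
    (Susp.continuous_lift (ContinuousMap.curry _).continuous)

theorem suspHomotopyFun_zero_left (g : 𝕃) (s : I) :
    suspHomotopyFun hd (0, (g, s)) = indepToWedgeFun hd (conePath hd g (2 * s - 1)) := by
  obtain ⟨hs₀, hs₁⟩ := s.2
  simp only [suspHomotopyFun, Set.Icc.coe_zero, sub_zero, mul_one, loopWeight, stretch, mul_zero,
    add_zero, div_one]
  rcases le_or_gt (2 * (s : ℝ) - 1) 0 with h | h
  · rw [conePath, if_pos h, indepToWedgeFun_toIndepSpace, if_pos (by linarith),
      min_eq_left (by linarith)]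
    congr 3; ring
  rw [conePath, if_neg h.not_ge, indepToWedgeFun_vCone, coe_clampI h.le (by linarith)]
  by_cases h' : (s : ℝ) ≤ 3 / 4
  · rw [if_pos h', if_pos (by linarith), min_eq_right (by linarith)]
    congr 3; ring
  · rw [if_neg h', if_neg (by linarith)]
    congr 3; ring

theorem wedgeHomotopyCurve_zero (x : 𝕎) :
    wedgeHomotopyCurve hd x 0 = indepToWedge hd (wedgeToIndep hd x) := by
  induction x using Wedge.ind with
  | hl d => exact (indepToWedgeFun_toIndepSpace hd d).symm
  | hr z =>
    induction z using Susp.ind with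
    | hmk g s => exact suspHomotopyFun_zero_left hd g s
    | hs => exact (indepToWedgeFun_toIndepSpace hd (vertexDel hd)).trans Wedge.inl_base |>.symm
    | hn => exact (indepToWedgeFun_vertex hd).symm

theorem wedgeHomotopyCurve_one (x : 𝕎) : wedgeHomotopyCurve hd x 1 = x := by
  induction x using Wedge.ind with
  | hl d => rfl
  | hr z =>
    induction z using Susp.ind with
    | hmk g s =>
      change suspHomotopyFun hd (1, (g, s)) = _
      simp only [suspHomotopyFun, Set.Icc.coe_one, sub_self, mul_zero, zero_div]
      split_ifs with h
      · have hs : s = 0 := Subtype.ext (le_antisymm h s.2.1)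
        subst hs
        norm_num [loopWeight, clampI_of_one_le, uCone_one, Susp.mk_zero]
        exact Wedge.inl_base
      · rw [stretch]
        norm_num [clampI, projIcc_val]
    | hs => rfl
    | hn => rfl

def wedgeHomotopy :
    ((indepToWedge hd).comp (wedgeToIndep hd)).Homotopy (ContinuousMap.id 𝕎) where
  toFun p := wedgeHomotopyCurve hd p.2 p.1
  continuous_toFun :=
    (ContinuousMap.uncurry (wedgeHomotopyCurve hd)).continuous.comp continuous_swap
  map_zero_left := wedgeHomotopyCurve_zero hd
  map_one_left := wedgeHomotopyCurve_one hd

def indepHomotopyEquivWedge : ContinuousMap.HomotopyEquiv 𝕏 𝕎 where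
  toFun := indepToWedge hd
  invFun := wedgeToIndep hd
  left_inv := ⟨indepHomotopy hd⟩
  right_inv := ⟨wedgeHomotopy hd⟩

end Dominates

end

/-- If `N_G[u] ⊆ N_G[v]` for distinct vertices `u, v`, then
`I(G) ≃ I(G - v) ∨ Σ I(G - N_G[v])`. -/
theorem indepComplex_homotopyEquiv_wedge_of_closed_nbhd_subset {V : Type} [Fintype V]
    (G : SimpleGraph V) (u v : V) (huv : u ≠ v)
    (h : (insert u (G.neighborSet u) : Set V) ⊆ insert v (G.neighborSet v)) :
    ∃ (p : cxSpace (restrictC (indepFaces G) {w | w ≠ v}))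
      (q : Susp (cxSpace (restrictC (indepFaces G) {w | w ≠ v ∧ ¬ G.Adj v w}))),
      Nonempty (ContinuousMap.HomotopyEquiv
        (cxSpace (indepFaces G))
        (Wedge (cxSpace (restrictC (indepFaces G) {w | w ≠ v}))
          (Susp (cxSpace (restrictC (indepFaces G) {w | w ≠ v ∧ ¬ G.Adj v w})))
          p q)) := by
  have hd := Dominates.of_closedNbhd_subset huv h
  exact ⟨hd.vertexDel, Susp.south, ⟨hd.indepHomotopyEquivWedge⟩⟩
end

section
/- For any graph G with at least one edge, χ(G*) ≤ cochord(G). -/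
open scoped Classical

/-! Colour each edge of `G` by a member of a cochordal cover containing it. Two edges of the
same colour `H` that are adjacent in `G*` span an induced `2K₂` in `H`, i.e. an induced `C₄`
in `Hᶜ`, which cochordality forbids. Covers exist because a single edge is cochordal. -/

section Cochordal

variable {V : Type} {H : SimpleGraph V}

lemma hasInducedCycle_four {a b c d : V} (hab : H.Adj a b) (hbc : H.Adj b c)
    (hcd : H.Adj c d) (hda : H.Adj d a) (hac : a ≠ c) (hbd : b ≠ d)
    (nac : ¬ H.Adj a c) (nbd : ¬ H.Adj b d) :
    HasInducedCycle H 4 := by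
  have := hab.ne; have := hbc.ne; have := hcd.ne; have := hda.ne
  have hinj : Function.Injective ![a, b, c, d] := by
    intro i j
    fin_cases i <;> fin_cases j <;> simp_all [eq_comm]
  refine ⟨⟨_, hinj⟩, fun i j => ?_⟩
  fin_cases i <;> fin_cases j <;> simp_all [H.adj_comm]

/-- The two chords `x₀x₂` and `x₁x₃` of an induced cycle of length `≥ 4` in `Hᶜ`
are two distinct edges of `H`. -/
lemma Cochordal.of_edgeSet_subsingleton (h : H.edgeSet.Subsingleton) : Cochordal H := by
  rintro n hn ⟨f, hf⟩
  have chord : ∀ i j : Fin n, i ≠ j → ¬ Hᶜ.Adj (f i) (f j) → s(f i, f j) ∈ H.edgeSet :=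
    fun i j hij hnadj => by
      simpa [f.injective.ne hij] using hnadj
  have h02 := chord ⟨0, by omega⟩ ⟨2, by omega⟩ (by simp) (by
    rw [hf]; simp [Nat.mod_eq_of_lt (show 1 < n by omega), Nat.mod_eq_of_lt (show 3 < n by omega)])
  have h13 := chord ⟨1, by omega⟩ ⟨3, by omega⟩ (by simp) (by
    rw [hf]
    have : 4 % n ≠ 1 := by
      rcases hn.eq_or_lt with rfl | h4
      · decide
      · rw [Nat.mod_eq_of_lt h4]; omega
    simp [Nat.mod_eq_of_lt (show 2 < n by omega), this.symm])
  rcases Sym2.eq_iff.1 (h h02 h13) with ⟨h01, -⟩ | ⟨h03, -⟩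
  · exact absurd (f.injective h01) (by simp)
  · exact absurd (f.injective h03) (by simp)

/-- An induced `2K₂` on the edges `ab`, `cd` of `H` is the induced cycle `a c b d` of `Hᶜ`. -/
lemma Cochordal.not_forall_ne_and_not_adj (hH : Cochordal H) {e f : Sym2 V}
    (he : e ∈ H.edgeSet) (hf : f ∈ H.edgeSet) :
    ¬ ∀ x ∈ e, ∀ y ∈ f, x ≠ y ∧ ¬ H.Adj x y := by
  induction e using Sym2.ind with | _ a b => ?_
  induction f using Sym2.ind with | _ c d => ?_
  intro h
  simp only [Sym2.mem_iff, forall_eq_or_imp, forall_eq] at h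
  obtain ⟨⟨⟨hac, nac⟩, had, nad⟩, ⟨hbc, nbc⟩, hbd, nbd⟩ := h
  exact hH 4 le_rfl (hasInducedCycle_four ⟨hac, nac⟩ ⟨Ne.symm hbc, fun h => nbc h.symm⟩
    ⟨hbd, nbd⟩ ⟨Ne.symm had, fun h => nad h.symm⟩ he.ne hf.ne (fun h => h.2 he) (fun h => h.2 hf))

end Cochordal

lemma exists_cochordal_cover {V : Type} (G : SimpleGraph V) [Finite G.edgeSet] :
    ∃ r, ∃ H : Fin r → SimpleGraph V,
      (∀ i, H i ≤ G ∧ Cochordal (H i)) ∧ ∀ u v, G.Adj u v → ∃ i, (H i).Adj u v := by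
  obtain ⟨r, ⟨eqv⟩⟩ := Finite.exists_equiv_fin G.edgeSet
  refine ⟨r, fun i => SimpleGraph.fromEdgeSet {(eqv.symm i).1}, fun i => ⟨?_, ?_⟩, ?_⟩
  · simp [(eqv.symm i).2]
  · refine Cochordal.of_edgeSet_subsingleton ?_
    rw [SimpleGraph.edgeSet_fromEdgeSet]
    exact Set.subsingleton_singleton.anti Set.sdiff_subset
  · intro u v huv
    exact ⟨eqv ⟨s(u, v), huv⟩, by simp [huv.ne]⟩

lemma Cochordal.not_starGraph_adj {V : Type} {G H : SimpleGraph V} (hH : Cochordal H)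
    (hHG : H ≤ G) {e f : G.edgeSet} (he : e.1 ∈ H.edgeSet) (hf : f.1 ∈ H.edgeSet) :
    ¬ (starGraph G).Adj e f := by
  rintro ⟨-, h | h⟩
  · exact hH.not_forall_ne_and_not_adj he hf fun x hx y hy =>
      ⟨(h x hx y hy).1, fun hxy => (h x hx y hy).2 (hHG hxy)⟩
  · exact hH.not_forall_ne_and_not_adj hf he fun x hx y hy =>
      ⟨(h x hx y hy).1, fun hxy => (h x hx y hy).2 (hHG hxy)⟩

theorem chromNum_star_le_cochordCover_general {V : Type} [Fintype V] (G : SimpleGraph V) :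
    chromNum (starGraph G) ≤ cochordCover G := by
  refine le_csInf (exists_cochordal_cover G) ?_
  rintro r ⟨H, hH, hcov⟩
  have hmem : ∀ e : G.edgeSet, ∃ i, e.1 ∈ (H i).edgeSet := by
    rintro ⟨e, he⟩
    induction e using Sym2.ind with | _ u v => exact hcov u v he
  choose c hc using hmem
  refine Nat.sInf_le ⟨c, fun e f hef hcef => ?_⟩
  exact (hH (c e)).2.not_starGraph_adj (hH (c e)).1 (hc e) (hcef ▸ hc f) hef

/-- For any graph `G` with at least one edge,
`χ(G*) ≤ cochord(G)`. -/
theorem chromNum_star_le_cochordCover {V : Type} [Fintype V] (G : SimpleGraph V)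
    (he : G.edgeSet.Nonempty) :
    chromNum (starGraph G) ≤ cochordCover G :=
  chromNum_star_le_cochordCover_general G
end
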